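/- arXiv:math/0702094 — 2 statements merged into one kernel-verified Lean document; each statement's English description precedes it below -/
import Mathlib

section
/- Let ‖·‖ be a reparametrization invariant norm on AS¹(ℝ). Let φ : ℝ → ℝ be a C¹ function with compact support, and suppose there exists t̄ ∈ ℝ such that φ is monotone on (−∞, t̄] and monotone on [t̄, +∞). Then ‖φ‖ = (sup_t |φ(t)|) · ‖Λ‖. -/
open MeasureTheory Set

noncomputable section

/-- The function `S` of the paper. -/
def Sfun (t : ℝ) : ℝ :=
  if t ≤ -1 then 0
  else if t ≤ 0 then (t + 1) ^ 2 / 2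
  else if t ≤ 1 then 1 - (t - 1) ^ 2 / 2
  else 1

/-- The function `Λ` of the paper. -/
def Lam (t : ℝ) : ℝ := Sfun (t + 1) - Sfun (t - 1)

/-- Almost sigmoidal functions of class `C¹`. -/
def AS1 (φ : ℝ → ℝ) : Prop :=
  ContDiff ℝ 1 φ ∧
    ∃ a b : ℝ, a ≤ b ∧ (∀ t ≤ a, φ t = 0) ∧ ∀ t, b ≤ t → φ t = φ b

/-- Orientation-preserving `C¹`-diffeomorphisms of `ℝ`. -/
def OPDiffeo (h : ℝ → ℝ) : Prop :=
  ContDiff ℝ 1 h ∧ Function.Bijective h ∧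
    (∃ g : ℝ → ℝ, ContDiff ℝ 1 g ∧ Function.LeftInverse g h ∧ Function.RightInverse g h) ∧
    ∀ t, 0 < deriv h t

/-- Total variation `V_φ = ∫ |φ'|`. -/
def totalVar (φ : ℝ → ℝ) : ℝ := ∫ t, |deriv φ t|

/-- A reparametrization invariant norm on `AS¹(ℝ)`. -/
structure IsRPINorm (N : (ℝ → ℝ) → ℝ) : Prop where
  nonneg : ∀ φ, AS1 φ → 0 ≤ N φ
  eq_zero_iff : ∀ φ, AS1 φ → (N φ = 0 ↔ ∀ t, φ t = 0)
  smul : ∀ (c : ℝ) (φ : ℝ → ℝ), AS1 φ → N (fun t => c * φ t) = |c| * N φ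
  triangle : ∀ φ ψ : ℝ → ℝ, AS1 φ → AS1 ψ → N (fun t => φ t + ψ t) ≤ N φ + N ψ
  invariant : ∀ (φ h : ℝ → ℝ), AS1 φ → OPDiffeo h → N (φ ∘ h) = N φ

/-- The standard RPI-norm `‖φ‖_[ψ]`. -/
def stdNorm (ψ φ : ℝ → ℝ) : ℝ :=
  ⨆ h : {h : ℝ → ℝ // OPDiffeo h}, |∫ t, φ (-t) * deriv (ψ ∘ h.1) t|

/-- The function `S_n`. -/
def Sn (n : ℕ) : ℝ → ℝ := fun t => ∑ i ∈ Finset.range n, (-1 : ℝ) ^ i * Sfun (t - 2 * (i : ℝ))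

/-- The function `L_n`. -/
def Lfun (n : ℕ) : ℝ → ℝ := fun t => ∑ i ∈ Finset.range n, (-1 : ℝ) ^ i * Lam (t - 4 * (i : ℝ))

/-- `W` is a separating set for `f`: `f` is monotone on each connected component of `ℝ \ W`. -/
def IsSepSet (f : ℝ → ℝ) (W : Finset ℝ) : Prop :=
  ∀ t, t ∉ (W : Set ℝ) →
    MonotoneOn f (connectedComponentIn ((W : Set ℝ)ᶜ) t) ∨
      AntitoneOn f (connectedComponentIn ((W : Set ℝ)ᶜ) t)

/-- `f` is piecewise monotone. -/
def PiecewiseMonotone (f : ℝ → ℝ) : Prop := ∃ W : Finset ℝ, IsSepSet f W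

/-- `l(f)`: the minimum cardinality of a separating set for `f`. -/
def lval (f : ℝ → ℝ) : ℕ := sInf {n : ℕ | ∃ W : Finset ℝ, W.card = n ∧ IsSepSet f W}


section RPIAux

open Filter Topology

/-- The "tent" function, the derivative of `Sfun`. -/
def tent (x : ℝ) : ℝ := max 0 (1 - |x|)

lemma tent_continuous : Continuous tent :=
  continuous_const.max (continuous_const.sub continuous_abs)

lemma tent_nonneg (x : ℝ) : 0 ≤ tent x := le_max_left _ _

lemma tent_le_one (x : ℝ) : tent x ≤ 1 :=
  max_le zero_le_one (by have := abs_nonneg x; linarith)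

lemma tent_eq_zero {x : ℝ} (hx : 1 ≤ |x|) : tent x = 0 :=
  max_eq_left (by linarith)

lemma tent_eq {x : ℝ} (hx : |x| ≤ 1) : tent x = 1 - |x| :=
  max_eq_right (by linarith)

lemma tent_pos {x : ℝ} (hx : |x| < 1) : 0 < tent x := by
  rw [tent_eq hx.le]; linarith

/-- Gluing two `HasDerivAt` statements on the left/right of a point. -/
lemma hasDerivAt_glue {f g k : ℝ → ℝ} {t₀ d : ℝ}
    (hg : HasDerivAt g d t₀) (hk : HasDerivAt k d t₀)
    (hfg : ∀ᶠ t in 𝓝[≤] t₀, f t = g t) (hfk : ∀ᶠ t in 𝓝[≥] t₀, f t = k t) :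
    HasDerivAt f d t₀ := by
  have hft₀g : f t₀ = g t₀ := hfg.self_of_nhdsWithin (by exact Set.mem_Iic.2 le_rfl)
  have hft₀k : f t₀ = k t₀ := hfk.self_of_nhdsWithin (by exact Set.mem_Ici.2 le_rfl)
  rw [hasDerivAt_iff_tendsto_slope, ← nhdsLT_sup_nhdsGT t₀, tendsto_sup]
  constructor
  · have hgs : Tendsto (slope g t₀) (𝓝[<] t₀) (𝓝 d) :=
      (hasDerivAt_iff_tendsto_slope.1 hg).mono_left
        (nhdsWithin_mono _ (fun x hx => ne_of_lt hx))
    refine hgs.congr' ?_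
    have : ∀ᶠ t in 𝓝[<] t₀, f t = g t := (nhdsWithin_mono _ Set.Iio_subset_Iic_self) hfg
    filter_upwards [this] with x hx
    simp [slope_def_field, hx, hft₀g]
  · have hks : Tendsto (slope k t₀) (𝓝[>] t₀) (𝓝 d) :=
      (hasDerivAt_iff_tendsto_slope.1 hk).mono_left
        (nhdsWithin_mono _ (fun x hx => ne_of_gt hx))
    refine hks.congr' ?_
    have : ∀ᶠ t in 𝓝[>] t₀, f t = k t := (nhdsWithin_mono _ Set.Ioi_subset_Ici_self) hfk
    filter_upwards [this] with x hx
    simp [slope_def_field, hx, hft₀k]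

lemma Sfun_eq₁ {t : ℝ} (h : t ≤ -1) : Sfun t = 0 := by
  unfold Sfun; split_ifs <;> first | rfl | nlinarith

lemma Sfun_eq₂ {t : ℝ} (h1 : -1 ≤ t) (h2 : t ≤ 0) : Sfun t = (t + 1) ^ 2 / 2 := by
  unfold Sfun; split_ifs <;> first | rfl | nlinarith

lemma Sfun_eq₃ {t : ℝ} (h1 : 0 ≤ t) (h2 : t ≤ 1) : Sfun t = 1 - (t - 1) ^ 2 / 2 := by
  unfold Sfun; split_ifs <;> first | rfl | nlinarith

lemma Sfun_eq₄ {t : ℝ} (h : 1 ≤ t) : Sfun t = 1 := by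
  unfold Sfun; split_ifs <;> first | rfl | nlinarith

lemma hasDerivAt_Sfun (t : ℝ) : HasDerivAt Sfun (tent t) t := by
  have hq1 : ∀ s : ℝ, HasDerivAt (fun x : ℝ => (x + 1) ^ 2 / 2) (s + 1) s := by
    intro s
    have h := (((hasDerivAt_id s).add_const (1:ℝ)).pow 2).div_const 2
    simp only [id_eq] at h
    simp only [Pi.pow_apply] at h; exact h.congr_deriv (by norm_num)
  have hq2 : ∀ s : ℝ, HasDerivAt (fun x : ℝ => 1 - (x - 1) ^ 2 / 2) (1 - s) s := by
    intro s
    have h := (((((hasDerivAt_id s).sub_const (1:ℝ)).pow 2).div_const 2).const_sub 1)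
    simp only [id_eq, Pi.pow_apply] at h
    exact h.congr_deriv (by norm_num)
  rcases lt_trichotomy t (-1) with h | h | h
  · have he : Sfun =ᶠ[𝓝 t] fun _ => 0 := by
      filter_upwards [Iio_mem_nhds h] with x hx
      exact Sfun_eq₁ (le_of_lt hx)
    have : HasDerivAt Sfun 0 t := (hasDerivAt_const t 0).congr_of_eventuallyEq he
    convert this using 1
    rw [tent_eq_zero (by rw [abs_of_neg (by linarith)]; linarith)]
  · subst h
    have : HasDerivAt Sfun 0 (-1 : ℝ) := by
      apply hasDerivAt_glue (g := fun _ => 0) (k := fun x => (x + 1) ^ 2 / 2)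
        (hasDerivAt_const _ 0) (by simpa using hq1 (-1))
      · filter_upwards [self_mem_nhdsWithin] with x hx
        exact Sfun_eq₁ hx
      · have h0 : Set.Iio (0:ℝ) ∈ 𝓝 (-1 : ℝ) := Iio_mem_nhds (by norm_num)
        filter_upwards [self_mem_nhdsWithin, nhdsWithin_le_nhds h0] with x hx1 hx2
        exact Sfun_eq₂ hx1 (le_of_lt hx2)
    convert this using 1
    rw [tent_eq_zero (by rw [abs_of_neg (by norm_num)]; norm_num)]
  · rcases lt_trichotomy t 0 with h0 | h0 | h0
    · have he : Sfun =ᶠ[𝓝 t] fun x => (x + 1) ^ 2 / 2 := by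
        filter_upwards [Ioo_mem_nhds h h0] with x hx
        exact Sfun_eq₂ hx.1.le hx.2.le
      have : HasDerivAt Sfun (t + 1) t := (hq1 t).congr_of_eventuallyEq he
      convert this using 1
      rw [tent_eq (by rw [abs_of_neg h0]; linarith), abs_of_neg h0]; ring
    · subst h0
      have : HasDerivAt Sfun 1 (0 : ℝ) := by
        apply hasDerivAt_glue (g := fun x => (x + 1) ^ 2 / 2) (k := fun x => 1 - (x - 1) ^ 2 / 2)
          (by simpa using hq1 0) (by simpa using hq2 0)
        · have h0 : Set.Ioi (-1 : ℝ) ∈ 𝓝 (0 : ℝ) := Ioi_mem_nhds (by norm_num)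
          filter_upwards [self_mem_nhdsWithin, nhdsWithin_le_nhds h0] with x hx1 hx2
          exact Sfun_eq₂ (le_of_lt hx2) hx1
        · have h0 : Set.Iio (1 : ℝ) ∈ 𝓝 (0 : ℝ) := Iio_mem_nhds (by norm_num)
          filter_upwards [self_mem_nhdsWithin, nhdsWithin_le_nhds h0] with x hx1 hx2
          exact Sfun_eq₃ hx1 (le_of_lt hx2)
      convert this using 1
      rw [tent_eq (by norm_num)]; norm_num
    · rcases lt_trichotomy t 1 with h1 | h1 | h1
      · have he : Sfun =ᶠ[𝓝 t] fun x => 1 - (x - 1) ^ 2 / 2 := by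
          filter_upwards [Ioo_mem_nhds h0 h1] with x hx
          exact Sfun_eq₃ hx.1.le hx.2.le
        have : HasDerivAt Sfun (1 - t) t := (hq2 t).congr_of_eventuallyEq he
        convert this using 1
        rw [tent_eq (by rw [abs_of_pos h0]; linarith), abs_of_pos h0]
      · subst h1
        have : HasDerivAt Sfun 0 (1 : ℝ) := by
          apply hasDerivAt_glue (g := fun x => 1 - (x - 1) ^ 2 / 2) (k := fun _ => 1)
            (by simpa using hq2 1) (hasDerivAt_const _ 1)
          · have h0 : Set.Ioi (0 : ℝ) ∈ 𝓝 (1 : ℝ) := Ioi_mem_nhds (by norm_num)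
            filter_upwards [self_mem_nhdsWithin, nhdsWithin_le_nhds h0] with x hx1 hx2
            exact Sfun_eq₃ (le_of_lt hx2) hx1
          · filter_upwards [self_mem_nhdsWithin] with x hx
            exact Sfun_eq₄ hx
        convert this using 1
        rw [tent_eq_zero (by norm_num : (1:ℝ) ≤ |(1:ℝ)|)]
      · have he : Sfun =ᶠ[𝓝 t] fun _ => 1 := by
          filter_upwards [Ioi_mem_nhds h1] with x hx
          exact Sfun_eq₄ hx.le
        have : HasDerivAt Sfun 0 t := (hasDerivAt_const t 1).congr_of_eventuallyEq he
        convert this using 1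
        rw [tent_eq_zero (by rw [abs_of_pos (by linarith)]; linarith)]

end RPIAux

section RPIAux2

open Filter Topology Set

lemma Sfun_deriv (t : ℝ) : deriv Sfun t = tent t := (hasDerivAt_Sfun t).deriv

lemma Sfun_differentiable : Differentiable ℝ Sfun :=
  fun t => (hasDerivAt_Sfun t).differentiableAt

lemma Sfun_contDiff : ContDiff ℝ 1 Sfun := by
  rw [contDiff_one_iff_deriv]
  refine ⟨Sfun_differentiable, ?_⟩
  have : deriv Sfun = tent := funext Sfun_deriv
  rw [this]; exact tent_continuous

lemma Sfun_monotone : Monotone Sfun := by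
  apply monotone_of_deriv_nonneg Sfun_differentiable
  intro t; rw [Sfun_deriv]; exact tent_nonneg t

lemma Sfun_nonneg (t : ℝ) : 0 ≤ Sfun t := by
  calc (0:ℝ) = Sfun (min t (-1)) := (Sfun_eq₁ (min_le_right _ _)).symm
  _ ≤ Sfun t := Sfun_monotone (min_le_left _ _)

lemma Sfun_le_one (t : ℝ) : Sfun t ≤ 1 := by
  calc Sfun t ≤ Sfun (max t 1) := Sfun_monotone (le_max_left _ _)
  _ = 1 := Sfun_eq₄ (le_max_right _ _)

lemma hasDerivAt_Lam (t : ℝ) : HasDerivAt Lam (tent (t + 1) - tent (t - 1)) t := by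
  have h1 : HasDerivAt (fun s : ℝ => Sfun (s + 1)) (tent (t + 1)) t := by
    have := (hasDerivAt_Sfun (t + 1)).comp t ((hasDerivAt_id t).add_const 1)
    simpa [Function.comp_def] using this
  have h2 : HasDerivAt (fun s : ℝ => Sfun (s - 1)) (tent (t - 1)) t := by
    have := (hasDerivAt_Sfun (t - 1)).comp t ((hasDerivAt_id t).sub_const 1)
    simpa [Function.comp_def] using this
  exact h1.sub h2

lemma Lam_deriv (t : ℝ) : deriv Lam t = tent (t + 1) - tent (t - 1) := (hasDerivAt_Lam t).deriv

lemma Lam_differentiable : Differentiable ℝ Lam := fun t => (hasDerivAt_Lam t).differentiableAt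

lemma Lam_contDiff : ContDiff ℝ 1 Lam := by
  rw [contDiff_one_iff_deriv]
  refine ⟨Lam_differentiable, ?_⟩
  have : deriv Lam = fun t => tent (t + 1) - tent (t - 1) := funext Lam_deriv
  rw [this]
  exact (tent_continuous.comp (continuous_id.add continuous_const)).sub
    (tent_continuous.comp (continuous_id.sub continuous_const))

lemma Lam_zero_left {t : ℝ} (h : t ≤ -2) : Lam t = 0 := by
  unfold Lam
  rw [Sfun_eq₁ (by linarith), Sfun_eq₁ (by linarith), sub_zero]

lemma Lam_zero_right {t : ℝ} (h : 2 ≤ t) : Lam t = 0 := by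
  unfold Lam
  rw [Sfun_eq₄ (by linarith), Sfun_eq₄ (by linarith), sub_self]

lemma Lam_cap {t : ℝ} (h1 : -1 ≤ t) (h2 : t ≤ 1) : Lam t = 1 - t ^ 2 / 2 := by
  unfold Lam
  rcases le_or_gt t 0 with h | h
  · rw [Sfun_eq₃ (by linarith) (by linarith), Sfun_eq₁ (by linarith)]; ring
  · rw [Sfun_eq₄ (by linarith), Sfun_eq₂ (by linarith) (by linarith)]; ring

lemma Lam_zero_apex : Lam 0 = 1 := by
  rw [Lam_cap (by norm_num) (by norm_num)]; norm_num

lemma Lam_deriv_nonneg {t : ℝ} (h : t ≤ 0) : 0 ≤ deriv Lam t := by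
  rw [Lam_deriv, show tent (t-1) = 0 from tent_eq_zero (by rw [abs_of_nonpos (by linarith)]; linarith),
    sub_zero]
  exact tent_nonneg _

lemma Lam_deriv_nonpos {t : ℝ} (h : 0 ≤ t) : deriv Lam t ≤ 0 := by
  rw [Lam_deriv, show tent (t+1) = 0 from tent_eq_zero (by rw [abs_of_nonneg (by linarith)]; linarith)]
  have := tent_nonneg (t - 1); linarith

lemma Lam_monotoneOn : MonotoneOn Lam (Iic 0) := by
  apply monotoneOn_of_deriv_nonneg (convex_Iic 0) Lam_contDiff.continuous.continuousOn
    (Lam_differentiable.differentiableOn)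
  intro t ht
  rw [interior_Iic] at ht
  exact Lam_deriv_nonneg ht.le

lemma Lam_antitoneOn : AntitoneOn Lam (Ici 0) := by
  apply antitoneOn_of_deriv_nonpos (convex_Ici 0) Lam_contDiff.continuous.continuousOn
    (Lam_differentiable.differentiableOn)
  intro t ht
  rw [interior_Ici] at ht
  exact Lam_deriv_nonpos ht.le

lemma Lam_nonneg (t : ℝ) : 0 ≤ Lam t := by
  rcases le_or_gt t 0 with h | h
  · rcases le_or_gt t (-2) with h2 | h2
    · rw [Lam_zero_left h2]
    · calc (0:ℝ) = Lam (-2) := (Lam_zero_left le_rfl).symm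
      _ ≤ Lam t := Lam_monotoneOn (by simp only [mem_Iic]; linarith) (by simpa using h) h2.le
  · rcases le_or_gt 2 t with h2 | h2
    · rw [Lam_zero_right h2]
    · calc (0:ℝ) = Lam 2 := (Lam_zero_right le_rfl).symm
      _ ≤ Lam t := Lam_antitoneOn (by simpa using h.le) (by simp only [mem_Ici]; linarith) h2.le

lemma Lam_le_one (t : ℝ) : Lam t ≤ 1 := by
  rcases le_or_gt t 0 with h | h
  · calc Lam t ≤ Lam 0 := Lam_monotoneOn (by simpa using h) (by simp) h
    _ = 1 := Lam_zero_apex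
  · calc Lam t ≤ Lam 0 := Lam_antitoneOn (by simp) (by simpa using h.le) h.le
    _ = 1 := Lam_zero_apex

end RPIAux2

section RPIAux3

open Filter Topology Set Function

lemma AS1_of_bounds {f : ℝ → ℝ} (hC : ContDiff ℝ 1 f) (A B : ℝ)
    (hL : ∀ t ≤ A, f t = 0) (hR : ∀ t, B ≤ t → f t = f B) : AS1 f :=
  ⟨hC, min A B, B, min_le_right _ _,
    fun t ht => hL t (le_trans ht (min_le_left _ _)), hR⟩

lemma AS1_of_zero_outside {f : ℝ → ℝ} (hC : ContDiff ℝ 1 f) (A B : ℝ)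
    (hL : ∀ t ≤ A, f t = 0) (hR : ∀ t, B ≤ t → f t = 0) : AS1 f :=
  AS1_of_bounds hC A B hL (fun t ht => by rw [hR t ht, hR B le_rfl])

lemma AS1_add {f g : ℝ → ℝ} (hf : AS1 f) (hg : AS1 g) : AS1 (fun t => f t + g t) := by
  obtain ⟨hf1, af, bf, habf, hf0, hfc⟩ := hf
  obtain ⟨hg1, ag, bg, habg, hg0, hgc⟩ := hg
  refine ⟨hf1.add hg1, min af ag, max bf bg, le_trans (min_le_left _ _) (le_trans habf (le_max_left _ _)), ?_, ?_⟩
  · intro t ht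
    show f t + g t = 0
    rw [hf0 t (le_trans ht (min_le_left _ _)), hg0 t (le_trans ht (min_le_right _ _)), add_zero]
  · intro t ht
    show f t + g t = f (max bf bg) + g (max bf bg)
    have h1 : f t = f (max bf bg) := by
      rw [hfc t (le_trans (le_max_left _ _) ht), hfc (max bf bg) (le_max_left _ _)]
    have h2 : g t = g (max bf bg) := by
      rw [hgc t (le_trans (le_max_right _ _) ht), hgc (max bf bg) (le_max_right _ _)]
    rw [h1, h2]

lemma AS1_smul (c : ℝ) {f : ℝ → ℝ} (hf : AS1 f) : AS1 (fun t => c * f t) := by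
  obtain ⟨hf1, af, bf, habf, hf0, hfc⟩ := hf
  exact ⟨hf1.const_smul c, af, bf, habf,
    fun t ht => by show c * f t = 0; rw [hf0 t ht, mul_zero],
    fun t ht => by show c * f t = c * f bf; rw [hfc t ht]⟩

lemma AS1_neg {f : ℝ → ℝ} (hf : AS1 f) : AS1 (fun t => -f t) := by
  have := AS1_smul (-1) hf
  simpa only [neg_one_mul] using this

lemma AS1_sub {f g : ℝ → ℝ} (hf : AS1 f) (hg : AS1 g) : AS1 (fun t => f t - g t) := by
  have := AS1_add hf (AS1_neg hg)
  simpa only [sub_eq_add_neg] using this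

lemma AS1_of_compactSupport {f : ℝ → ℝ} (hC : ContDiff ℝ 1 f) (hcs : HasCompactSupport f) :
    AS1 f := by
  obtain ⟨r, hr⟩ := hcs.isBounded.subset_closedBall 0
  refine AS1_of_zero_outside hC (-(|r| + 1)) (|r| + 1) ?_ ?_
  · intro t ht
    apply image_eq_zero_of_notMem_tsupport
    intro hmem
    have := hr hmem
    simp only [Metric.mem_closedBall, Real.dist_eq, sub_zero] at this
    have h1 := le_abs_self r
    have h2 := neg_abs_le t
    linarith
  · intro t ht
    apply image_eq_zero_of_notMem_tsupport
    intro hmem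
    have := hr hmem
    simp only [Metric.mem_closedBall, Real.dist_eq, sub_zero] at this
    have h1 := le_abs_self r
    have h2 := le_abs_self t
    linarith

section NormHelpers

variable {N : (ℝ → ℝ) → ℝ} (hN : IsRPINorm N)
include hN

lemma rpi_neg {f : ℝ → ℝ} (hf : AS1 f) : N (fun t => -f t) = N f := by
  have h := hN.smul (-1) f hf
  simpa only [neg_one_mul, abs_neg, abs_one, one_mul] using h

/-- Reverse triangle style inequality: `N f ≤ N g + N (f - g)`. -/
lemma rpi_near {f g : ℝ → ℝ} (hf : AS1 f) (hg : AS1 g) :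
    N f ≤ N g + N (fun t => f t - g t) := by
  have h3 := hN.triangle g (fun t => f t - g t) hg (AS1_sub hf hg)
  have e : (fun t => g t + (f t - g t)) = f := by funext t; ring
  rw [e] at h3
  exact h3

lemma rpi_abs_sub_le {f g : ℝ → ℝ} (hf : AS1 f) (hg : AS1 g) :
    |N f - N g| ≤ N (fun t => f t - g t) := by
  rw [abs_sub_le_iff]
  constructor
  · have := rpi_near hN hf hg; linarith
  · have h := rpi_near hN hg hf
    have e : N (fun t => g t - f t) = N (fun t => f t - g t) := by
      have := rpi_neg hN (AS1_sub hf hg)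
      rw [← this]
      congr 1
      funext t; ring
    linarith [h, e]

end NormHelpers

lemma opdiffeo_of (h : ℝ → ℝ) (hc : ContDiff ℝ 1 h) (hd : ∀ t, 0 < deriv h t)
    (hs : Function.Surjective h) : OPDiffeo h := by
  have hmono : StrictMono h := strictMono_of_deriv_pos hd
  have hinj := hmono.injective
  have hdiff : Differentiable ℝ h := hc.differentiable one_ne_zero
  set g := Function.invFun h with hgdef
  have hgl : Function.LeftInverse g h := Function.leftInverse_invFun hinj
  have hgr : Function.RightInverse g h := Function.rightInverse_invFun hs
  have hge : ∀ y, g y = (StrictMono.orderIsoOfSurjective h hmono hs).symm y := by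
    intro y
    apply hinj
    rw [hgr y]
    exact (StrictMono.orderIsoOfSurjective_self_symm_apply h hmono hs y).symm
  have hgc : Continuous g := by
    rw [funext hge]
    exact OrderIso.continuous _
  have hder : ∀ y, HasDerivAt g (deriv h (g y))⁻¹ y := by
    intro y
    apply HasDerivAt.of_local_left_inverse (hgc.continuousAt)
      ((hdiff (g y)).hasDerivAt) (ne_of_gt (hd _))
    exact Eventually.of_forall fun x => hgr x
  have hgderiv : deriv g = fun y => (deriv h (g y))⁻¹ := funext fun y => (hder y).deriv
  have hgcd : ContDiff ℝ 1 g := by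
    rw [contDiff_one_iff_deriv]
    refine ⟨fun y => (hder y).differentiableAt, ?_⟩
    rw [hgderiv]
    exact (((contDiff_one_iff_deriv.mp hc).2.comp hgc)).inv₀ (fun y => ne_of_gt (hd _))
  exact ⟨hc, ⟨hinj, hs⟩, ⟨g, hgcd, hgl, hgr⟩, hd⟩

lemma opdiffeo_comp {f g : ℝ → ℝ} (hf : OPDiffeo f) (hg : OPDiffeo g) : OPDiffeo (f ∘ g) := by
  obtain ⟨hf1, hf2, ⟨f', hf'1, hf'2, hf'3⟩, hf4⟩ := hf
  obtain ⟨hg1, hg2, ⟨g', hg'1, hg'2, hg'3⟩, hg4⟩ := hg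
  refine ⟨hf1.comp hg1, hf2.comp hg2, ⟨g' ∘ f', hg'1.comp hf'1, ?_, ?_⟩, ?_⟩
  · intro x; simp only [Function.comp_apply]; rw [hf'2 (g x), hg'2 x]
  · intro x; simp only [Function.comp_apply]; rw [hg'3 (f' x), hf'3 x]
  · intro t
    rw [deriv_comp t ((hf1.differentiable one_ne_zero) _) ((hg1.differentiable one_ne_zero) _)]
    exact mul_pos (hf4 _) (hg4 _)

lemma opdiffeo_affine (a b : ℝ) (ha : 0 < a) : OPDiffeo (fun t => a * t + b) := by
  apply opdiffeo_of
  · exact ((contDiff_id.const_smul a).add contDiff_const : ContDiff ℝ 1 (fun t : ℝ => a * t + b))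
  · intro t
    have : HasDerivAt (fun t : ℝ => a * t + b) a t := by
      have := ((hasDerivAt_id t).const_mul a).add_const b
      simpa using this
    rw [this.deriv]; exact ha
  · intro y
    exact ⟨(y - b) / a, by field_simp; ring⟩

lemma opdiffeo_translate (c : ℝ) : OPDiffeo (fun t => t + c) := by
  have := opdiffeo_affine 1 c one_pos
  simpa only [one_mul] using this

end RPIAux3

section Glue

open Filter Topology Set Function

/-- The key gluing lemma: if `F` and `G` are `C¹`, agree outside `(u', v')`,
and are strictly increasing (positive derivative) on `[u, v] ⊇ [u', v']` (with room to
spare), then `F = G ∘ h` for an orientation-preserving `C¹` diffeomorphism `h`. -/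
lemma glue_exists {F G : ℝ → ℝ} {u u' v' v : ℝ}
    (hu : u < u') (huv : u' ≤ v') (hv : v' < v)
    (hF : ContDiff ℝ 1 F) (hG : ContDiff ℝ 1 G)
    (hFpos : ∀ t ∈ Icc u v, 0 < deriv F t) (hGpos : ∀ t ∈ Icc u v, 0 < deriv G t)
    (hL : ∀ t ≤ u', F t = G t) (hR : ∀ t, v' ≤ t → F t = G t) :
    ∃ h : ℝ → ℝ, OPDiffeo h ∧ F = G ∘ h := by
  have huv' : u < v := lt_of_lt_of_le hu (le_trans huv hv.le)
  have hFd : Differentiable ℝ F := hF.differentiable one_ne_zero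
  have hGd : Differentiable ℝ G := hG.differentiable one_ne_zero
  have hFmono : StrictMonoOn F (Icc u v) :=
    strictMonoOn_of_deriv_pos (convex_Icc u v) hF.continuous.continuousOn
      (fun x hx => hFpos x (interior_subset hx))
  have hGmono : StrictMonoOn G (Icc u v) :=
    strictMonoOn_of_deriv_pos (convex_Icc u v) hG.continuous.continuousOn
      (fun x hx => hGpos x (interior_subset hx))
  have hFu : F u = G u := hL u (le_of_lt hu)
  have hFv : F v = G v := hR v (le_of_lt hv)
  have key : ∀ t ∈ Icc u v, ∃ s, s ∈ Icc u v ∧ G s = F t := by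
    intro t ht
    have h1 : F t ∈ Icc (G u) (G v) := by
      constructor
      · rw [← hFu]
        exact (hFmono.monotoneOn) (left_mem_Icc.2 huv'.le) ht ht.1
      · rw [← hFv]
        exact (hFmono.monotoneOn) ht (right_mem_Icc.2 huv'.le) ht.2
    obtain ⟨s, hs, hGs⟩ := intermediate_value_Icc huv'.le hG.continuous.continuousOn h1
    exact ⟨s, hs, hGs⟩
  choose! sfn hspec using key
  set h : ℝ → ℝ := fun t => if t ∈ Ioo u v then sfn t else t with hdef
  have hIcc : ∀ t ∈ Icc u v, h t ∈ Icc u v ∧ G (h t) = F t := by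
    intro t ht
    by_cases hio : t ∈ Ioo u v
    · have : h t = sfn t := by simp only [hdef, if_pos hio]
      rw [this]
      exact ⟨(hspec t ht).1, (hspec t ht).2⟩
    · have hne : h t = t := by simp only [hdef, if_neg hio]
      rw [hne]
      rcases ht with ⟨ht1, ht2⟩
      rcases eq_or_lt_of_le ht1 with he | hlt
      · refine ⟨⟨ht1, ht2⟩, ?_⟩
        rw [← he, hFu]
      · rcases eq_or_lt_of_le ht2 with he2 | hlt2
        · refine ⟨⟨ht1, ht2⟩, ?_⟩
          rw [he2, hFv]
        · exact absurd ⟨hlt, hlt2⟩ hio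
  have hGh : ∀ t, G (h t) = F t := by
    intro t
    by_cases ht : t ∈ Icc u v
    · exact (hIcc t ht).2
    · have hne : h t = t := by
        simp only [hdef, if_neg (fun h' => ht (Ioo_subset_Icc_self h'))]
      rw [hne]
      rw [mem_Icc, not_and_or] at ht
      rcases ht with ht | ht
      · push_neg at ht
        exact (hL t (le_trans ht.le (le_of_lt hu))).symm
      · push_neg at ht
        exact (hR t (le_trans (le_of_lt hv) ht.le)).symm
  have hid_low : ∀ t ≤ u', h t = t := by
    intro t ht
    by_cases hio : t ∈ Ioo u v
    · have heq : h t = sfn t := by simp only [hdef, if_pos hio]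
      have h1 := hspec t (Ioo_subset_Icc_self hio)
      have h2 : G (sfn t) = G t := by rw [h1.2, hL t ht]
      rw [heq]
      exact hGmono.injOn h1.1 (Ioo_subset_Icc_self hio) h2
    · simp only [hdef, if_neg hio]
  have hid_high : ∀ t, v' ≤ t → h t = t := by
    intro t ht
    by_cases hio : t ∈ Ioo u v
    · have heq : h t = sfn t := by simp only [hdef, if_pos hio]
      have h1 := hspec t (Ioo_subset_Icc_self hio)
      have h2 : G (sfn t) = G t := by rw [h1.2, hR t ht]
      rw [heq]
      exact hGmono.injOn h1.1 (Ioo_subset_Icc_self hio) h2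
    · simp only [hdef, if_neg hio]
  -- smoothness and derivative positivity
  have hmain : ∀ t₀ : ℝ, ContDiffAt ℝ 1 h t₀ ∧ 0 < deriv h t₀ := by
    intro t₀
    rcases lt_or_ge t₀ u' with hc | hc
    · have hev : h =ᶠ[𝓝 t₀] id := by
        filter_upwards [Iio_mem_nhds hc] with x hx
        exact hid_low x (le_of_lt hx)
      constructor
      · exact contDiffAt_id.congr_of_eventuallyEq hev
      · rw [hev.deriv_eq, deriv_id]; norm_num
    rcases lt_or_ge v' t₀ with hc2 | hc2
    · have hev : h =ᶠ[𝓝 t₀] id := by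
        filter_upwards [Ioi_mem_nhds hc2] with x hx
        exact hid_high x (le_of_lt hx)
      constructor
      · exact contDiffAt_id.congr_of_eventuallyEq hev
      · rw [hev.deriv_eq, deriv_id]; norm_num
    -- middle case
    have ht₀ : t₀ ∈ Ioo u v := ⟨lt_of_lt_of_le hu hc, lt_of_le_of_lt hc2 hv⟩
    have ht₀' : t₀ ∈ Icc u v := Ioo_subset_Icc_self ht₀
    obtain ⟨hs₀Icc, hGs₀⟩ := hIcc t₀ ht₀'
    set s₀ := h t₀ with hs₀def
    have hs₀Ioo : s₀ ∈ Ioo u v := by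
      constructor
      · rcases eq_or_lt_of_le hs₀Icc.1 with he | hlt
        · exfalso
          have : G u = F t₀ := by rw [← he] at hGs₀; exact hGs₀
          have h2 : F u < F t₀ := hFmono (left_mem_Icc.2 huv'.le) ht₀' ht₀.1
          rw [hFu] at h2; linarith
        · exact hlt
      · rcases eq_or_lt_of_le hs₀Icc.2 with he | hlt
        · exfalso
          have : G v = F t₀ := by rw [he] at hGs₀; exact hGs₀
          have h2 : F t₀ < F v := hFmono ht₀' (right_mem_Icc.2 huv'.le) ht₀.2
          rw [hFv] at h2; linarith
        · exact hlt
    have hdG : 0 < deriv G s₀ := hGpos s₀ hs₀Icc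
    have hdGne : deriv G s₀ ≠ 0 := ne_of_gt hdG
    have hCA : ContDiffAt ℝ 1 G s₀ := hG.contDiffAt
    have hfd : HasFDerivAt G
        (ContinuousLinearEquiv.unitsEquivAut ℝ (Units.mk0 (deriv G s₀) hdGne) :
          ℝ →L[ℝ] ℝ) s₀ :=
      ((hGd s₀).hasDerivAt).hasFDerivAt_equiv hdGne
    set linv := hCA.localInverse hfd one_ne_zero with hlinvdef
    have hstrict := hCA.hasStrictFDerivAt' hfd one_ne_zero
    have hlinvCD : ContDiffAt ℝ 1 linv (G s₀) := hCA.to_localInverse hfd one_ne_zero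
    have hleft : ∀ᶠ x in 𝓝 s₀, linv (G x) = x := hstrict.eventually_left_inverse
    have hright : ∀ᶠ y in 𝓝 (G s₀), G (linv y) = y := hstrict.eventually_right_inverse
    have hlc : ContinuousAt linv (G s₀) := hstrict.localInverse_continuousAt
    have hlinv_s₀ : linv (G s₀) = s₀ := hstrict.localInverse_apply_image
    have hFt₀ : F t₀ = G s₀ := hGs₀.symm
    -- h agrees with linv ∘ F near t₀
    have hcontFt : ContinuousAt (fun t => linv (F t)) t₀ := by
      apply ContinuousAt.comp
      · rw [hFt₀]; exact hlc
      · exact hF.continuous.continuousAt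
    have hval : linv (F t₀) = s₀ := by rw [hFt₀, hlinv_s₀]
    have hev : h =ᶠ[𝓝 t₀] fun t => linv (F t) := by
      have e1 : ∀ᶠ t in 𝓝 t₀, t ∈ Ioo u v := Ioo_mem_nhds ht₀.1 ht₀.2
      have e2 : ∀ᶠ t in 𝓝 t₀, linv (F t) ∈ Ioo u v := by
        have : ∀ᶠ x in 𝓝 (linv (F t₀)), x ∈ Ioo u v := by
          rw [hval]; exact Ioo_mem_nhds hs₀Ioo.1 hs₀Ioo.2
        exact hcontFt.eventually_mem (by rw [hval]; exact Ioo_mem_nhds hs₀Ioo.1 hs₀Ioo.2)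
      have e3 : ∀ᶠ t in 𝓝 t₀, G (linv (F t)) = F t := by
        have hFtend : Tendsto F (𝓝 t₀) (𝓝 (G s₀)) := by
          rw [← hFt₀]; exact hF.continuous.continuousAt
        exact hFtend.eventually hright
      filter_upwards [e1, e2, e3] with t h1 h2 h3
      have hh := hIcc t (Ioo_subset_Icc_self h1)
      have : G (h t) = G (linv (F t)) := by rw [hh.2, h3]
      exact hGmono.injOn hh.1 (Ioo_subset_Icc_self h2) this
    constructor
    · refine ContDiffAt.congr_of_eventuallyEq ?_ hev
      apply ContDiffAt.comp
      · rw [hFt₀]; exact hlinvCD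
      · exact hF.contDiffAt
    · have hsd : HasStrictDerivAt G (deriv G s₀) s₀ := hCA.hasStrictDerivAt one_ne_zero
      have hlinvd : HasStrictDerivAt linv (deriv G s₀)⁻¹ (G s₀) :=
        hsd.to_local_left_inverse hdGne hleft
      have hcomp : HasDerivAt (fun t => linv (F t)) ((deriv G s₀)⁻¹ * deriv F t₀) t₀ := by
        have h1 : HasDerivAt linv (deriv G s₀)⁻¹ (F t₀) := by
          rw [hFt₀]; exact hlinvd.hasDerivAt
        exact HasDerivAt.comp t₀ h1 (hFd t₀).hasDerivAt
      rw [hev.deriv_eq, hcomp.deriv]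
      exact mul_pos (inv_pos.2 hdG) (hFpos t₀ ht₀')
  have hCD : ContDiff ℝ 1 h := contDiff_iff_contDiffAt.2 fun t₀ => (hmain t₀).1
  have hder : ∀ t, 0 < deriv h t := fun t => (hmain t).2
  have hsurj : Surjective h := by
    intro y
    rcases le_or_gt y u with hy | hy
    · exact ⟨y, hid_low y (le_trans hy (le_of_lt hu))⟩
    rcases le_or_gt v y with hy2 | hy2
    · exact ⟨y, hid_high y (le_trans (le_of_lt hv) hy2)⟩
    have h1 : h u = u := hid_low u (le_of_lt hu)
    have h2 : h v = v := hid_high v (le_of_lt hv)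
    have h3 : y ∈ Icc (h u) (h v) := by rw [h1, h2]; exact ⟨hy.le, hy2.le⟩
    obtain ⟨x, _, hx⟩ := intermediate_value_Icc huv'.le hCD.continuous.continuousOn h3
    exact ⟨x, hx⟩
  refine ⟨h, opdiffeo_of h hCD hder hsurj, funext fun t => (hGh t).symm⟩

end Glue

section Primitive

open Filter Topology Set Function intervalIntegral

lemma hasDerivAt_Sfun_affine (s q t : ℝ) :
    HasDerivAt (fun x => Sfun (s * x + q)) (s * tent (s * t + q)) t := by
  have h := (hasDerivAt_Sfun (s * t + q)).comp t (((hasDerivAt_id t).const_mul s).add_const q)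
  simp only [id_eq, mul_one] at h
  simpa [Function.comp_def, mul_comm] using h

lemma AS1_Sfun : AS1 Sfun :=
  AS1_of_bounds Sfun_contDiff (-1) 1 (fun _ h => Sfun_eq₁ h)
    (fun t ht => by rw [Sfun_eq₄ ht, Sfun_eq₄ le_rfl])

lemma AS1_Lam : AS1 Lam :=
  AS1_of_zero_outside Lam_contDiff (-2) 2 (fun _ h => Lam_zero_left h)
    (fun _ h => Lam_zero_right h)

/-- Primitive of a nonnegative continuous function supported in `(c, d)`. -/
lemma primitive_spec {k : ℝ → ℝ} (hk : Continuous k) {c d Cb : ℝ} (hcd : c ≤ d)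
    (hknn : ∀ x, 0 ≤ k x) (hsupp : ∀ x, x ∉ Ioo c d → k x = 0) (hCb : ∀ x, k x ≤ Cb) :
    ∃ P : ℝ → ℝ, ContDiff ℝ 1 P ∧ (∀ t, deriv P t = k t) ∧
      (∀ t ≤ c, P t = 0) ∧ (∀ t, d ≤ t → P t = P d) ∧ (0 ≤ P d) ∧ P d ≤ (d - c) * Cb := by
  set P : ℝ → ℝ := fun t => ∫ s in c..t, k s with hPdef
  have hInt : ∀ a b : ℝ, IntervalIntegrable k MeasureTheory.volume a b :=
    fun a b => hk.intervalIntegrable a b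
  have hder : ∀ t, HasDerivAt P (k t) t := fun t => (hk.integral_hasStrictDerivAt c t).hasDerivAt
  have hderiv : ∀ t, deriv P t = k t := fun t => (hder t).deriv
  have hPzero : ∀ t ≤ c, P t = 0 := by
    intro t ht
    have : EqOn k 0 (uIcc c t) := by
      intro x hx
      apply hsupp
      rw [uIcc_of_ge ht] at hx
      intro hmem
      exact absurd hmem.1 (not_lt.2 hx.2)
    simp only [hPdef]
    rw [integral_congr this]
    simp
  have hPd : ∀ t, d ≤ t → P t = P d := by
    intro t ht
    have hsplit : P d + ∫ s in d..t, k s = P t := integral_add_adjacent_intervals (hInt c d) (hInt d t)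
    have hzero : (∫ s in d..t, k s) = 0 := by
      have : EqOn k 0 (uIcc d t) := by
        intro x hx
        apply hsupp
        rw [uIcc_of_le ht] at hx
        intro hmem
        exact absurd hmem.2 (not_lt.2 hx.1)
      rw [integral_congr this]
      simp
    rw [← hsplit, hzero, add_zero]
  have hPnn : 0 ≤ P d := integral_nonneg hcd (fun x _ => hknn x)
  have hPbound : P d ≤ (d - c) * Cb := by
    have h1 : P d ≤ ∫ _ in c..d, Cb := by
      apply integral_mono_on hcd (hInt c d) (intervalIntegrable_const) (fun x _ => hCb x)
    rw [intervalIntegral.integral_const] at h1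
    simpa using h1
  have hCD : ContDiff ℝ 1 P := by
    rw [contDiff_one_iff_deriv]
    exact ⟨fun t => (hder t).differentiableAt, by rw [funext hderiv]; exact hk⟩
  exact ⟨P, hCD, hderiv, hPzero, hPd, hPnn, hPbound⟩

section SigmoidLemma

variable {N : (ℝ → ℝ) → ℝ} (hN : IsRPINorm N)
include hN

omit hN in
lemma eq_of_abs_sub_le_all' {x y : ℝ} {C : ℝ}
    (h : ∀ ε : ℝ, 0 < ε → |x - y| ≤ ε * C) : x = y := by
  have h1 : |x - y| ≤ 0 := by
    by_contra hx
    push_neg at hx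
    rcases le_or_gt C 0 with hC | hC
    · have := h 1 one_pos; nlinarith
    · have h2 := h (|x - y| / (2 * C)) (by positivity)
      have heq : |x - y| / (2 * C) * C = |x - y| / 2 := by field_simp
      rw [heq] at h2
      linarith
  have := abs_nonneg (x - y)
  have : |x - y| = 0 := le_antisymm h1 this
  rw [abs_eq_zero] at this
  linarith

/-- All `C¹` nondecreasing "sigmoids" of height `m` have norm `m * N Sfun`. -/
lemma sigmoid_norm {σ : ℝ → ℝ} {a b m : ℝ}
    (hσ : ContDiff ℝ 1 σ) (hσ' : ∀ t, 0 ≤ deriv σ t)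
    (h0 : ∀ t ≤ a, σ t = 0) (h1 : ∀ t, b ≤ t → σ t = m) :
    N σ = m * N Sfun := by
  have hσd : Differentiable ℝ σ := hσ.differentiable one_ne_zero
  have hmono : Monotone σ := monotone_of_deriv_nonneg hσd hσ'
  set A' := min a (-1 : ℝ) with hA'
  set B' := max b (1 : ℝ) with hB'
  have hA'B' : A' ≤ B' := le_trans (le_trans (min_le_right _ _) (by norm_num)) (le_max_right _ _)
  have hσ0 : ∀ t ≤ A', σ t = 0 := fun t ht => h0 t (le_trans ht (min_le_left _ _))
  have hσm : ∀ t, B' ≤ t → σ t = m := fun t ht => h1 t (le_trans (le_max_left _ _) ht)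
  have hAS1σ : AS1 σ := AS1_of_bounds hσ A' B' hσ0
    (fun t ht => by rw [hσm t ht, hσm B' le_rfl])
  have hm0 : 0 ≤ m := by
    have := hmono hA'B'
    rw [hσ0 A' le_rfl, hσm B' le_rfl] at this
    exact this
  rcases eq_or_lt_of_le hm0 with hm | hm
  · -- m = 0 : σ ≡ 0
    have hzero : ∀ t, σ t = 0 := by
      intro t
      have hle : σ t ≤ σ (max t B') := hmono (le_max_left _ _)
      have hge : σ (min t A') ≤ σ t := hmono (min_le_left _ _)
      rw [hσm (max t B') (le_max_right _ _), ← hm] at hle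
      rw [hσ0 (min t A') (min_le_right _ _)] at hge
      linarith
    rw [(hN.eq_zero_iff σ hAS1σ).2 hzero, ← hm, zero_mul]
  -- m > 0
  set τ : ℝ → ℝ := fun t => m * Sfun t with hτdef
  have hτCD : ContDiff ℝ 1 τ := contDiff_const.mul Sfun_contDiff
  have hτ0 : ∀ t ≤ A', τ t = 0 := fun t ht => by
    simp only [hτdef]; rw [Sfun_eq₁ (le_trans ht (min_le_right _ _)), mul_zero]
  have hτm : ∀ t, B' ≤ t → τ t = m := fun t ht => by
    simp only [hτdef]; rw [Sfun_eq₄ (le_trans (le_max_right _ _) ht), mul_one]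
  have hAS1τ : AS1 τ := AS1_of_bounds hτCD A' B' hτ0
    (fun t ht => by rw [hτm t ht, hτm B' le_rfl])
  have hτd : ∀ t, HasDerivAt τ (m * tent t) t := by
    intro t
    exact (hasDerivAt_Sfun t).const_mul m
  have hτ'nn : ∀ t, 0 ≤ deriv τ t := by
    intro t
    rw [(hτd t).deriv]
    exact mul_nonneg hm0 (tent_nonneg t)
  -- ramp
  set u : ℝ := A' - 1 with hu
  set v : ℝ := B' + 1 with hv
  have huv : u < v := by simp only [hu, hv]; linarith
  set sl : ℝ := 2 / (v - u + 2) with hsl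
  have hslpos : 0 < sl := by
    apply div_pos two_pos; linarith
  set q : ℝ := -1 - sl * (u - 1) with hq
  set R : ℝ → ℝ := fun t => Sfun (sl * t + q) with hRdef
  have hRd : ∀ t, HasDerivAt R (sl * tent (sl * t + q)) t := fun t => hasDerivAt_Sfun_affine sl q t
  have hRCD : ContDiff ℝ 1 R :=
    Sfun_contDiff.comp ((contDiff_id.const_smul sl).add contDiff_const)
  have hne : v - u + 2 ≠ 0 := ne_of_gt (by linarith)
  have hkey : sl * (v - u + 2) = 2 := by
    rw [hsl]; exact div_mul_cancel₀ 2 hne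
  have hv1 : sl * (v + 1) + q = 1 := by
    rw [hq]; linear_combination hkey
  have he0 : sl * (u - 1) + q = -1 := by rw [hq]; ring
  have hR0 : ∀ t ≤ u - 1, R t = 0 := by
    intro t ht
    apply Sfun_eq₁
    have := mul_le_mul_of_nonneg_left ht hslpos.le
    linarith
  have hR1 : ∀ t, v + 1 ≤ t → R t = 1 := by
    intro t ht
    apply Sfun_eq₄
    have := mul_le_mul_of_nonneg_left ht hslpos.le
    linarith
  have hAS1R : AS1 R := AS1_of_bounds hRCD (u - 1) (v + 1) hR0
    (fun t ht => by rw [hR1 t ht, hR1 (v + 1) le_rfl])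
  have hRpos : ∀ t ∈ Icc u v, 0 < tent (sl * t + q) := by
    intro t ht
    rcases ht with ⟨ht1, ht2⟩
    apply tent_pos
    rw [abs_lt]
    constructor
    · have := mul_le_mul_of_nonneg_left ht1 hslpos.le
      have h2 : sl * (u - 1) < sl * u := by nlinarith
      linarith
    · have := mul_le_mul_of_nonneg_left ht2 hslpos.le
      have h2 : sl * v < sl * (v + 1) := by nlinarith
      linarith
  -- the ε-comparison
  have hcomp : ∀ ε : ℝ, 0 < ε → |N σ - N τ| ≤ ε * (2 * N R) := by
    intro ε hε
    set Fσ : ℝ → ℝ := fun t => σ t + ε * R t with hFσdef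
    set Fτ : ℝ → ℝ := fun t => τ t + ε * R t with hFτdef
    have hFσd : ∀ t, HasDerivAt Fσ (deriv σ t + ε * (sl * tent (sl * t + q))) t :=
      fun t => ((hσd t).hasDerivAt).add ((hRd t).const_mul ε)
    have hFτd : ∀ t, HasDerivAt Fτ (m * tent t + ε * (sl * tent (sl * t + q))) t :=
      fun t => (hτd t).add ((hRd t).const_mul ε)
    have hFσCD : ContDiff ℝ 1 Fσ := hσ.add (hRCD.const_smul ε)
    have hFτCD : ContDiff ℝ 1 Fτ := hτCD.add (hRCD.const_smul ε)
    have hglue : ∃ h : ℝ → ℝ, OPDiffeo h ∧ Fσ = Fτ ∘ h := by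
      apply glue_exists (u := u) (u' := A') (v' := B') (v := v)
        (by simp only [hu]; linarith) hA'B' (by simp only [hv]; linarith) hFσCD hFτCD
      · intro t ht
        rw [(hFσd t).deriv]
        have h1 := hσ' t
        have h2 := mul_pos hε (mul_pos hslpos (hRpos t ht))
        linarith
      · intro t ht
        rw [(hFτd t).deriv]
        have h1 : 0 ≤ m * tent t := mul_nonneg hm0 (tent_nonneg t)
        have h2 := mul_pos hε (mul_pos hslpos (hRpos t ht))
        linarith
      · intro t ht
        show σ t + ε * R t = τ t + ε * R t
        rw [hσ0 t ht, hτ0 t ht]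
      · intro t ht
        show σ t + ε * R t = τ t + ε * R t
        rw [hσm t ht, hτm t ht]
    obtain ⟨h, hOPD, hFeq⟩ := hglue
    have hAS1εR : AS1 (fun t => ε * R t) := AS1_smul ε hAS1R
    have hAS1Fσ : AS1 Fσ := AS1_add hAS1σ hAS1εR
    have hAS1Fτ : AS1 Fτ := AS1_add hAS1τ hAS1εR
    have hNeq : N Fσ = N Fτ := by
      rw [hFeq]
      exact hN.invariant Fτ h hAS1Fτ hOPD
    have hNεR : N (fun t => ε * R t) = ε * N R := by
      rw [hN.smul ε R hAS1R, abs_of_pos hε]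
    have hd1 : |N σ - N Fσ| ≤ ε * N R := by
      have h1 := rpi_abs_sub_le hN hAS1σ hAS1Fσ
      have h2 : N (fun t => σ t - Fσ t) = ε * N R := by
        have e : (fun t => σ t - Fσ t) = fun t => -(ε * R t) := by
          funext t; simp only [hFσdef]; ring
        rw [e, rpi_neg hN hAS1εR, hNεR]
      rw [h2] at h1
      exact h1
    have hd2 : |N τ - N Fτ| ≤ ε * N R := by
      have h1 := rpi_abs_sub_le hN hAS1τ hAS1Fτ
      have h2 : N (fun t => τ t - Fτ t) = ε * N R := by
        have e : (fun t => τ t - Fτ t) = fun t => -(ε * R t) := by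
          funext t; simp only [hFτdef]; ring
        rw [e, rpi_neg hN hAS1εR, hNεR]
      rw [h2] at h1
      exact h1
    calc |N σ - N τ| = |(N σ - N Fσ) + (N Fσ - N Fτ) + (N Fτ - N τ)| := by ring_nf
    _ ≤ |N σ - N Fσ| + |N Fσ - N Fτ| + |N Fτ - N τ| := abs_add_three _ _ _
    _ ≤ ε * N R + 0 + ε * N R := by
        have e2 : |N Fσ - N Fτ| = 0 := by rw [hNeq, sub_self, abs_zero]
        have e3 : |N Fτ - N τ| ≤ ε * N R := by rw [abs_sub_comm]; exact hd2
        linarith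
    _ = ε * (2 * N R) := by ring
  have := eq_of_abs_sub_le_all' (x := N σ) (y := N τ) hcomp
  rw [this, hτdef, hN.smul m Sfun AS1_Sfun, abs_of_pos hm]

end SigmoidLemma

end Primitive

section Jordan

open Filter Topology Set Function

variable {N : (ℝ → ℝ) → ℝ} (hN : IsRPINorm N)
include hN

/-- Any `C¹` function whose derivative is supported in `(c, d)` and bounded by `Cb`,
and which vanishes to the left, has norm at most `2 (d - c) Cb ‖S‖`. -/
lemma rpi_norm_le_small {κ : ℝ → ℝ} (hκ : ContDiff ℝ 1 κ) {c d Cb : ℝ} (hcd : c ≤ d)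
    (h0 : ∀ t ≤ c, κ t = 0) (hds : ∀ x, x ∉ Ioo c d → deriv κ x = 0)
    (hCb : ∀ x, |deriv κ x| ≤ Cb) :
    N κ ≤ 2 * ((d - c) * Cb) * N Sfun := by
  have hκd : Differentiable ℝ κ := hκ.differentiable one_ne_zero
  have hκ' : Continuous (deriv κ) := (contDiff_one_iff_deriv.mp hκ).2
  have hCb0 : 0 ≤ Cb := le_trans (abs_nonneg _) (hCb c)
  set kp : ℝ → ℝ := fun x => max (deriv κ x) 0 with hkp
  set kq : ℝ → ℝ := fun x => max (-deriv κ x) 0 with hkq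
  have hkpc : Continuous kp := hκ'.max continuous_const
  have hkqc : Continuous kq := hκ'.neg.max continuous_const
  have hkpnn : ∀ x, 0 ≤ kp x := fun x => le_max_right _ _
  have hkqnn : ∀ x, 0 ≤ kq x := fun x => le_max_right _ _
  have hkps : ∀ x, x ∉ Ioo c d → kp x = 0 := by
    intro x hx; simp only [hkp]; rw [hds x hx]; simp
  have hkqs : ∀ x, x ∉ Ioo c d → kq x = 0 := by
    intro x hx; simp only [hkq]; rw [hds x hx]; simp
  have hkpb : ∀ x, kp x ≤ Cb := fun x =>
    max_le (le_trans (le_abs_self _) (hCb x)) hCb0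
  have hkqb : ∀ x, kq x ≤ Cb := by
    intro x
    apply max_le _ hCb0
    have h1 := neg_abs_le (deriv κ x)
    have h2 := hCb x
    linarith
  obtain ⟨P, hPCD, hPder, hP0, hPd, hPnn, hPb⟩ := primitive_spec hkpc hcd hkpnn hkps hkpb
  obtain ⟨Q, hQCD, hQder, hQ0, hQd, hQnn, hQb⟩ := primitive_spec hkqc hcd hkqnn hkqs hkqb
  have hPQ : ∀ t, P t - Q t = κ t := by
    have hDdiff : Differentiable ℝ (fun t => P t - Q t - κ t) :=
      ((hPCD.differentiable one_ne_zero).sub (hQCD.differentiable one_ne_zero)).sub hκd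
    have hD0 : ∀ t, deriv (fun t => P t - Q t - κ t) t = 0 := by
      intro t
      rw [deriv_fun_sub (f := fun t => P t - Q t) (((hPCD.differentiable one_ne_zero) t).sub ((hQCD.differentiable one_ne_zero) t)) (hκd t),
        deriv_fun_sub ((hPCD.differentiable one_ne_zero) t) ((hQCD.differentiable one_ne_zero) t),
        hPder, hQder]
      have : kp t - kq t = deriv κ t := by
        simp only [hkp, hkq]
        rcases le_total (deriv κ t) 0 with h | h
        · rw [max_eq_right h, max_eq_left (by linarith)]; ring
        · rw [max_eq_left h, max_eq_right (by linarith)]; ring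
      rw [this]; ring
    have hconst := is_const_of_deriv_eq_zero hDdiff hD0
    intro t
    have h1 := hconst t c
    have h2 : P c - Q c - κ c = 0 := by
      rw [hP0 c le_rfl, hQ0 c le_rfl, h0 c le_rfl]; ring
    linarith [h1, h2]
  have hASP : AS1 P := AS1_of_bounds hPCD c d hP0 (fun t ht => by rw [hPd t ht])
  have hASQ : AS1 Q := AS1_of_bounds hQCD c d hQ0 (fun t ht => by rw [hQd t ht])
  have hNP : N P = P d * N Sfun :=
    sigmoid_norm hN hPCD (fun t => by rw [hPder]; exact hkpnn t) hP0 hPd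
  have hNQ : N Q = Q d * N Sfun :=
    sigmoid_norm hN hQCD (fun t => by rw [hQder]; exact hkqnn t) hQ0 hQd
  have htri : N κ ≤ N P + N Q := by
    have h1 := hN.triangle P (fun t => -Q t) hASP (AS1_neg hASQ)
    have e : (fun t => P t + (fun t => -Q t) t) = κ := by
      funext t
      have := hPQ t
      simp only
      linarith
    rw [e, rpi_neg hN hASQ] at h1
    exact h1
  have hNS : 0 ≤ N Sfun := hN.nonneg Sfun AS1_Sfun
  calc N κ ≤ N P + N Q := htri
  _ = (P d + Q d) * N Sfun := by rw [hNP, hNQ]; ring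
  _ ≤ ((d - c) * Cb + (d - c) * Cb) * N Sfun := by
      apply mul_le_mul_of_nonneg_right _ hNS
      linarith
  _ = 2 * ((d - c) * Cb) * N Sfun := by ring

end Jordan

section Side

open Filter Topology Set Function

lemma lipschitz_of_deriv_bound {f : ℝ → ℝ} (hf : Differentiable ℝ f)
    (hc : Continuous (deriv f)) {C : ℝ} (hC : ∀ x, |deriv f x| ≤ C) :
    ∀ s t : ℝ, |f t - f s| ≤ C * |t - s| := by
  intro s t
  have h1 : f t - f s = ∫ x in s..t, deriv f x :=
    (intervalIntegral.integral_deriv_eq_sub (fun x _ => hf x) (hc.intervalIntegrable _ _)).symm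
  rw [h1]
  have h2 := intervalIntegral.norm_integral_le_of_norm_le_const
    (C := C) (f := deriv f) (a := s) (b := t) (fun x _ => hC x)
  simpa [Real.norm_eq_abs] using h2

/-- The one-sided surgery lemma. -/
lemma side_lemma {N : (ℝ → ℝ) → ℝ} (hN : IsRPINorm N)
    {f R₀ R₀' η η' : ℝ → ℝ} {p M A B δ ε Cm : ℝ}
    (hδ : 0 < δ) (hδ2 : δ ≤ 1/2) (hA : A ≤ p - 2) (hB : p + 2 ≤ B)
    (hε : 0 < ε) (hCm : 0 < Cm)
    (hfCD : ContDiff ℝ 1 f) (hfM : ∀ t, f t ≤ M) (hfp : f p = M)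
    (hf0L : ∀ t ≤ A, f t = 0) (hf0R : ∀ t, B ≤ t → f t = 0)
    (hf'L : ∀ t, t < p → 0 ≤ deriv f t) (hf'R : ∀ t, p < t → deriv f t ≤ 0)
    (hf'b : ∀ t, |deriv f t| ≤ Cm)
    (hR₀d : ∀ t, HasDerivAt R₀ (R₀' t) t) (hR₀CD : ContDiff ℝ 1 R₀) (hAS1R₀ : AS1 R₀)
    (hR₀L : ∀ t, A - 1 < t → t < p → 0 < R₀' t)
    (hR₀R : ∀ t, p < t → t < B + 1 → R₀' t < 0)
    (hηd : ∀ t, HasDerivAt η (η' t) t) (hηCD : ContDiff ℝ 1 η)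
    (hη0 : ∀ t, 0 ≤ η t) (hη1 : ∀ t, η t ≤ 1)
    (hηcap : ∀ t, p - δ ≤ t → t ≤ p + δ → η t = 1)
    (hηout : ∀ t, t ∉ Ioo (p - 2*δ) (p + 2*δ) → η t = 0 ∧ η' t = 0)
    (hη'L : ∀ t ≤ p, 0 ≤ η' t) (hη'R : ∀ t, p ≤ t → η' t ≤ 0)
    (hη'b : ∀ t, |η' t| ≤ 2/δ) :
    ∀ F : ℝ → ℝ, (F = fun t => f t + ε * R₀ t + η t * (M - f t)) →
    ContDiff ℝ 1 F ∧
    (∀ t, p - δ ≤ t → t ≤ p + δ → F t = M + ε * R₀ t) ∧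
    (∀ t ≤ A, F t = ε * R₀ t) ∧
    (∀ t, B ≤ t → F t = ε * R₀ t) ∧
    (∀ t ∈ Icc (A - 1/2) (p - δ/2), 0 < deriv F t) ∧
    (∀ t ∈ Icc (p + δ/2) (B + 1/2), deriv F t < 0) ∧
    N (fun t => F t - f t) ≤ ε * N R₀ + 40 * δ * Cm * N Sfun ∧
    AS1 F := by
  intro F hFdef
  have hfd : Differentiable ℝ f := hfCD.differentiable one_ne_zero
  have hf' : Continuous (deriv f) := (contDiff_one_iff_deriv.mp hfCD).2
  have hLip : ∀ s t : ℝ, |f t - f s| ≤ Cm * |t - s| := lipschitz_of_deriv_bound hfd hf' hf'b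
  set κ : ℝ → ℝ := fun t => η t * (M - f t) with hκdef
  set κ' : ℝ → ℝ := fun t => η' t * (M - f t) + η t * (0 - deriv f t) with hκ'def
  have hκd : ∀ t, HasDerivAt κ (κ' t) t :=
    fun t => (hηd t).mul ((hasDerivAt_const t M).sub (hfd t).hasDerivAt)
  have hηCont : Continuous η := hηCD.continuous
  have hη'c : Continuous η' := by
    have := (contDiff_one_iff_deriv.mp hηCD).2
    rwa [funext fun t => (hηd t).deriv] at this
  have hκ'c : Continuous κ' := by
    rw [hκ'def]
    exact (hη'c.mul (continuous_const.sub hfCD.continuous)).add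
      (hηCont.mul (continuous_const.sub hf'))
  have hκCD : ContDiff ℝ 1 κ := by
    rw [contDiff_one_iff_deriv]
    refine ⟨fun t => (hκd t).differentiableAt, ?_⟩
    rw [funext fun t => (hκd t).deriv]
    exact hκ'c
  have hFd : ∀ t, HasDerivAt F (deriv f t + ε * R₀' t + κ' t) t := by
    intro t
    rw [hFdef]
    exact (((hfd t).hasDerivAt).add ((hR₀d t).const_mul ε)).add (hκd t)
  have hFCD : ContDiff ℝ 1 F := by
    rw [hFdef]
    exact (hfCD.add (hR₀CD.const_smul ε)).add hκCD
  have hMf : ∀ x, p - 2*δ ≤ x → x ≤ p + 2*δ → M - f x ≤ Cm * (2*δ) := by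
    intro x h1 h2
    have h3 := hLip p x
    rw [hfp] at h3
    have h4 : |x - p| ≤ 2*δ := by rw [abs_le]; constructor <;> linarith
    have h5 : M - f x ≤ |f x - M| := by rw [abs_sub_comm]; exact le_abs_self _
    calc M - f x ≤ |f x - M| := h5
    _ ≤ Cm * |x - p| := h3
    _ ≤ Cm * (2*δ) := mul_le_mul_of_nonneg_left h4 hCm.le
  have hMfnn : ∀ x, 0 ≤ M - f x := fun x => by linarith [hfM x]
  have hκ'b : ∀ x, |κ' x| ≤ 5 * Cm := by
    intro x
    by_cases hx : x ∈ Ioo (p - 2*δ) (p + 2*δ)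
    · have h1 : |η' x * (M - f x)| ≤ 4 * Cm := by
        rw [abs_mul]
        have h2 : |M - f x| ≤ Cm * (2*δ) := by
          rw [abs_of_nonneg (hMfnn x)]
          exact hMf x hx.1.le hx.2.le
        calc |η' x| * |M - f x| ≤ (2/δ) * (Cm * (2*δ)) := by
              apply mul_le_mul (hη'b x) h2 (abs_nonneg _)
              positivity
        _ = 4 * Cm := by field_simp; ring
      have h3 : |η x * (0 - deriv f x)| ≤ Cm := by
        rw [abs_mul]
        calc |η x| * |0 - deriv f x| ≤ 1 * Cm := by
              apply mul_le_mul _ _ (abs_nonneg _) zero_le_one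
              · rw [abs_of_nonneg (hη0 x)]; exact hη1 x
              · rw [zero_sub, abs_neg]; exact hf'b x
        _ = Cm := one_mul Cm
      calc |κ' x| ≤ |η' x * (M - f x)| + |η x * (0 - deriv f x)| := abs_add_le _ _
      _ ≤ 4 * Cm + Cm := by linarith
      _ = 5 * Cm := by ring
    · obtain ⟨he0, he1⟩ := hηout x hx
      have hz : κ' x = 0 := by rw [hκ'def]; simp only; rw [he0, he1]; ring
      rw [hz, abs_zero]
      positivity
  have hcap : ∀ t, p - δ ≤ t → t ≤ p + δ → F t = M + ε * R₀ t := by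
    intro t h1 h2
    rw [hFdef]
    simp only
    rw [hηcap t h1 h2]
    ring
  have houtL : ∀ t ≤ A, F t = ε * R₀ t := by
    intro t ht
    have hη00 : η t = 0 := (hηout t (by
      simp only [mem_Ioo, not_and_or]
      left; push_neg; linarith)).1
    rw [hFdef]; simp only
    rw [hf0L t ht, hη00]; ring
  have houtR : ∀ t, B ≤ t → F t = ε * R₀ t := by
    intro t ht
    have hη00 : η t = 0 := (hηout t (by
      simp only [mem_Ioo, not_and_or]
      right; push_neg; linarith)).1
    rw [hFdef]; simp only
    rw [hf0R t ht, hη00]; ring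
  have hregroup : ∀ t, deriv f t + ε * R₀' t + κ' t
      = (1 - η t) * deriv f t + η' t * (M - f t) + ε * R₀' t := by
    intro t; rw [hκ'def]; ring
  have hposL : ∀ t ∈ Icc (A - 1/2) (p - δ/2), 0 < deriv F t := by
    intro t ht
    rcases ht with ⟨ht1, ht2⟩
    have htp : t < p := by linarith
    rw [(hFd t).deriv, hregroup t]
    have e1 : 0 ≤ (1 - η t) * deriv f t :=
      mul_nonneg (by linarith [hη1 t]) (hf'L t htp)
    have e2 : 0 ≤ η' t * (M - f t) := mul_nonneg (hη'L t htp.le) (hMfnn t)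
    have e3 : 0 < ε * R₀' t := mul_pos hε (hR₀L t (by linarith) htp)
    linarith
  have hnegR : ∀ t ∈ Icc (p + δ/2) (B + 1/2), deriv F t < 0 := by
    intro t ht
    rcases ht with ⟨ht1, ht2⟩
    have htp : p < t := by linarith
    rw [(hFd t).deriv, hregroup t]
    have e1 : (1 - η t) * deriv f t ≤ 0 :=
      mul_nonpos_of_nonneg_of_nonpos (by linarith [hη1 t]) (hf'R t htp)
    have e2 : η' t * (M - f t) ≤ 0 :=
      mul_nonpos_of_nonpos_of_nonneg (hη'R t htp.le) (hMfnn t)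
    have e3 : ε * R₀' t < 0 :=
      mul_neg_of_pos_of_neg hε (hR₀R t htp (by linarith))
    linarith
  -- norm bound
  have hκ0L : ∀ t ≤ p - 2*δ, κ t = 0 := by
    intro t ht
    have := (hηout t (by simp only [mem_Ioo, not_and_or]; left; push_neg; linarith)).1
    rw [hκdef]; simp only; rw [this, zero_mul]
  have hκ0R : ∀ t, p + 2*δ ≤ t → κ t = 0 := by
    intro t ht
    have := (hηout t (by simp only [mem_Ioo, not_and_or]; right; push_neg; linarith)).1
    rw [hκdef]; simp only; rw [this, zero_mul]
  have hAS1κ : AS1 κ := AS1_of_zero_outside hκCD (p - 2*δ) (p + 2*δ) hκ0L hκ0R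
  have hNκ : N κ ≤ 2 * ((p + 2*δ - (p - 2*δ)) * (5 * Cm)) * N Sfun := by
    apply rpi_norm_le_small hN hκCD (by linarith) hκ0L
    · intro x hx
      rw [(hκd x).deriv]
      obtain ⟨he0, he1⟩ := hηout x hx
      rw [hκ'def]; simp only; rw [he0, he1]; ring
    · intro x
      rw [(hκd x).deriv]
      exact hκ'b x
  have hNκ' : N κ ≤ 40 * δ * Cm * N Sfun := by
    have e : 2 * ((p + 2*δ - (p - 2*δ)) * (5 * Cm)) = 40 * δ * Cm := by ring
    rwa [e] at hNκ
  have hAS1εR : AS1 (fun t => ε * R₀ t) := AS1_smul ε hAS1R₀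
  have hAS1f : AS1 f := AS1_of_zero_outside hfCD A B hf0L hf0R
  have hNdiff : N (fun t => F t - f t) ≤ ε * N R₀ + 40 * δ * Cm * N Sfun := by
    have h1 := hN.triangle (fun t => ε * R₀ t) κ hAS1εR hAS1κ
    have e : (fun t => (fun t => ε * R₀ t) t + κ t) = fun t => F t - f t := by
      funext t
      rw [hFdef, hκdef]
      simp only
      ring
    rw [e] at h1
    have h2 : N (fun t => ε * R₀ t) = ε * N R₀ := by
      rw [hN.smul ε R₀ hAS1R₀, abs_of_pos hε]
    rw [h2] at h1
    linarith [hNκ']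
  have hAS1F : AS1 F := by
    rw [hFdef]
    exact AS1_add (AS1_add hAS1f hAS1εR) hAS1κ
  exact ⟨hFCD, hcap, houtL, houtR, hposL, hnegR, hNdiff, hAS1F⟩

end Side

section Bump

open Filter Topology Set Function

lemma deriv_nonneg_of_mono_right {f : ℝ → ℝ} {t p : ℝ} (hd : DifferentiableAt ℝ f t)
    (htp : t < p) (hm : ∀ x, t ≤ x → x ≤ p → f t ≤ f x) : 0 ≤ deriv f t := by
  have h1 := hasDerivAt_iff_tendsto_slope.1 hd.hasDerivAt
  have h2 : Tendsto (slope f t) (𝓝[>] t) (𝓝 (deriv f t)) :=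
    h1.mono_left (nhdsWithin_mono _ fun x hx => ne_of_gt hx)
  apply ge_of_tendsto h2
  have hmem : Iio p ∈ 𝓝[>] t := nhdsWithin_le_nhds (Iio_mem_nhds htp)
  filter_upwards [self_mem_nhdsWithin, hmem] with x hx1 hx2
  rw [slope_def_field]
  have hx1' : t < x := hx1
  have hx2' : x < p := hx2
  apply div_nonneg _ (by linarith)
  have := hm x hx1'.le hx2'.le
  linarith

lemma deriv_nonpos_of_anti_right {f : ℝ → ℝ} {t : ℝ} (hd : DifferentiableAt ℝ f t)
    (hm : ∀ x, t ≤ x → f x ≤ f t) : deriv f t ≤ 0 := by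
  have h1 := hasDerivAt_iff_tendsto_slope.1 hd.hasDerivAt
  have h2 : Tendsto (slope f t) (𝓝[>] t) (𝓝 (deriv f t)) :=
    h1.mono_left (nhdsWithin_mono _ fun x hx => ne_of_gt hx)
  apply le_of_tendsto h2
  filter_upwards [self_mem_nhdsWithin] with x hx1
  rw [slope_def_field]
  have hx1' : t < x := hx1
  apply div_nonpos_of_nonpos_of_nonneg _ (by linarith)
  have := hm x hx1'.le
  linarith

set_option maxHeartbeats 2000000 in
/-- The central result: a compactly supported `C¹` bump, increasing then decreasing with
maximum `M > 0` at `p`, has norm `M * N Lam`. -/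
lemma bump_norm {N : (ℝ → ℝ) → ℝ} (hN : IsRPINorm N) {φ : ℝ → ℝ} {p M A B : ℝ}
    (hφ : ContDiff ℝ 1 φ) (hA : A ≤ p - 2) (hB : p + 2 ≤ B)
    (hmono : MonotoneOn φ (Iic p)) (hanti : AntitoneOn φ (Ici p))
    (h0L : ∀ t ≤ A, φ t = 0) (h0R : ∀ t, B ≤ t → φ t = 0)
    (hMp : φ p = M) (hMpos : 0 < M) :
    N φ = M * N Lam := by
  have hφd : Differentiable ℝ φ := hφ.differentiable one_ne_zero
  have hφ' : Continuous (deriv φ) := (contDiff_one_iff_deriv.mp hφ).2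
  have hAB : A < B := by linarith
  -- φ ≤ M
  have hφM : ∀ t, φ t ≤ M := by
    intro t
    rcases le_or_gt t p with h | h
    · rw [← hMp]; exact hmono (mem_Iic.2 h) (mem_Iic.2 le_rfl) h
    · rw [← hMp]; exact hanti (mem_Ici.2 le_rfl) (mem_Ici.2 h.le) h.le
  -- derivative signs
  have hφ'L : ∀ t, t < p → 0 ≤ deriv φ t := by
    intro t ht
    apply deriv_nonneg_of_mono_right (hφd t) ht
    intro x h1 h2
    exact hmono (mem_Iic.2 (by linarith)) (mem_Iic.2 h2) h1
  have hφ'R : ∀ t, p < t → deriv φ t ≤ 0 := by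
    intro t ht
    apply deriv_nonpos_of_anti_right (hφd t)
    intro x hx
    exact hanti (mem_Ici.2 ht.le) (mem_Ici.2 (by linarith)) hx
  -- derivative bound
  have hd0 : ∀ t, t ∉ Icc A B → deriv φ t = 0 := by
    intro t ht
    rw [mem_Icc, not_and_or] at ht
    rcases ht with ht | ht
    · push_neg at ht
      have he : φ =ᶠ[𝓝 t] fun _ => 0 := by
        filter_upwards [Iio_mem_nhds ht] with x hx
        exact h0L x hx.le
      rw [he.deriv_eq, deriv_const]
    · push_neg at ht
      have he : φ =ᶠ[𝓝 t] fun _ => 0 := by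
        filter_upwards [Ioi_mem_nhds ht] with x hx
        exact h0R x hx.le
      rw [he.deriv_eq, deriv_const]
  obtain ⟨x₀, _, hx₀⟩ := isCompact_Icc.exists_isMaxOn ⟨A, left_mem_Icc.2 hAB.le⟩
    ((continuous_abs.comp hφ').continuousOn (s := Icc A B))
  rw [isMaxOn_iff] at hx₀
  set Cm : ℝ := max (max (|deriv φ x₀|) M) 1 with hCmdef
  have hCm1 : (1:ℝ) ≤ Cm := le_max_right _ _
  have hCm : 0 < Cm := lt_of_lt_of_le one_pos hCm1
  have hMCm : M ≤ Cm := le_trans (le_max_right _ _) (le_max_left _ _)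
  have hφ'b : ∀ t, |deriv φ t| ≤ Cm := by
    intro t
    by_cases ht : t ∈ Icc A B
    · exact le_trans (hx₀ t ht) (le_trans (le_max_left _ _) (le_max_left _ _))
    · rw [hd0 t ht, abs_zero]; linarith
  -- the model bump ψ
  set ψ : ℝ → ℝ := fun t => M * Lam (t - p) with hψdef
  have hψd : ∀ t, HasDerivAt ψ (M * (tent (t - p + 1) - tent (t - p - 1))) t := by
    intro t
    have h1 := (hasDerivAt_Lam (t - p)).comp t ((hasDerivAt_id t).sub_const p)
    simp only [id_eq, mul_one] at h1
    exact h1.const_mul M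
  have hψCD : ContDiff ℝ 1 ψ :=
    contDiff_const.mul (Lam_contDiff.comp (contDiff_id.sub contDiff_const))
  have hψp : ψ p = M := by
    simp only [hψdef, sub_self, Lam_zero_apex, mul_one]
  have hψ0L : ∀ t ≤ A, ψ t = 0 := by
    intro t ht
    simp only [hψdef]
    rw [Lam_zero_left (by linarith), mul_zero]
  have hψ0R : ∀ t, B ≤ t → ψ t = 0 := by
    intro t ht
    simp only [hψdef]
    rw [Lam_zero_right (by linarith), mul_zero]
  have hψM : ∀ t, ψ t ≤ M := by
    intro t
    simp only [hψdef]
    calc M * Lam (t - p) ≤ M * 1 := mul_le_mul_of_nonneg_left (Lam_le_one _) hMpos.le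
    _ = M := mul_one M
  have hψ'L : ∀ t, t < p → 0 ≤ deriv ψ t := by
    intro t ht
    rw [(hψd t).deriv]
    have h1 : tent (t - p - 1) = 0 :=
      tent_eq_zero (le_abs.2 (Or.inr (by linarith)))
    rw [h1, sub_zero]
    exact mul_nonneg hMpos.le (tent_nonneg _)
  have hψ'R : ∀ t, p < t → deriv ψ t ≤ 0 := by
    intro t ht
    rw [(hψd t).deriv]
    have h1 : tent (t - p + 1) = 0 :=
      tent_eq_zero (le_abs.2 (Or.inl (by linarith)))
    rw [h1, zero_sub]
    exact mul_nonpos_of_nonneg_of_nonpos hMpos.le (by linarith [tent_nonneg (t - p - 1)])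
  have hψ'b : ∀ t, |deriv ψ t| ≤ Cm := by
    intro t
    rw [(hψd t).deriv, abs_mul, abs_of_pos hMpos]
    have h1 : |tent (t - p + 1) - tent (t - p - 1)| ≤ 1 := by
      rw [abs_le]
      have := tent_nonneg (t - p + 1)
      have := tent_le_one (t - p + 1)
      have := tent_nonneg (t - p - 1)
      have := tent_le_one (t - p - 1)
      constructor <;> linarith
    calc M * |tent (t - p + 1) - tent (t - p - 1)| ≤ M * 1 :=
          mul_le_mul_of_nonneg_left h1 hMpos.le
    _ = M := mul_one M
    _ ≤ Cm := hMCm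
  -- the fixed two-sided ramp R₀
  have hpA : (0:ℝ) < p - A + 1 := by linarith
  have hBp : (0:ℝ) < B + 1 - p := by linarith
  set s₁ : ℝ := 2 / (p - A + 1) with hs₁def
  set s₂ : ℝ := 2 / (B + 1 - p) with hs₂def
  have hs₁ : 0 < s₁ := div_pos two_pos hpA
  have hs₂ : 0 < s₂ := div_pos two_pos hBp
  set q₁ : ℝ := -1 - s₁ * (A - 1) with hq₁def
  set q₂ : ℝ := -1 - s₂ * p with hq₂def
  have hk₁ : s₁ * (p - A + 1) = 2 := by rw [hs₁def]; exact div_mul_cancel₀ 2 (ne_of_gt hpA)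
  have hk₂ : s₂ * (B + 1 - p) = 2 := by rw [hs₂def]; exact div_mul_cancel₀ 2 (ne_of_gt hBp)
  have hv₁a : s₁ * (A - 1) + q₁ = -1 := by rw [hq₁def]; ring
  have hv₁b : s₁ * p + q₁ = 1 := by rw [hq₁def]; linear_combination hk₁
  have hv₂a : s₂ * p + q₂ = -1 := by rw [hq₂def]; ring
  have hv₂b : s₂ * (B + 1) + q₂ = 1 := by rw [hq₂def]; linear_combination hk₂
  set R₀ : ℝ → ℝ := fun t => Sfun (s₁ * t + q₁) - Sfun (s₂ * t + q₂) with hR₀def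
  set R₀' : ℝ → ℝ := fun t => s₁ * tent (s₁ * t + q₁) - s₂ * tent (s₂ * t + q₂) with hR₀'def
  have hR₀d : ∀ t, HasDerivAt R₀ (R₀' t) t :=
    fun t => (hasDerivAt_Sfun_affine s₁ q₁ t).sub (hasDerivAt_Sfun_affine s₂ q₂ t)
  have hR₀CD : ContDiff ℝ 1 R₀ :=
    (Sfun_contDiff.comp ((contDiff_id.const_smul s₁).add contDiff_const)).sub
      (Sfun_contDiff.comp ((contDiff_id.const_smul s₂).add contDiff_const))
  have hR₀L : ∀ t, A - 1 < t → t < p → 0 < R₀' t := by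
    intro t h1 h2
    have ht1 : 0 < tent (s₁ * t + q₁) := by
      apply tent_pos
      rw [abs_lt]
      have e1 : s₁ * (A - 1) < s₁ * t := mul_lt_mul_of_pos_left h1 hs₁
      have e2 : s₁ * t < s₁ * p := mul_lt_mul_of_pos_left h2 hs₁
      constructor <;> linarith
    have ht2 : tent (s₂ * t + q₂) = 0 := by
      apply tent_eq_zero
      apply le_abs.2 (Or.inr _)
      have e1 : s₂ * t ≤ s₂ * p := mul_le_mul_of_nonneg_left h2.le hs₂.le
      linarith
    rw [hR₀'def]
    simp only
    rw [ht2, mul_zero, sub_zero]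
    exact mul_pos hs₁ ht1
  have hR₀R : ∀ t, p < t → t < B + 1 → R₀' t < 0 := by
    intro t h1 h2
    have ht1 : tent (s₁ * t + q₁) = 0 := by
      apply tent_eq_zero
      apply le_abs.2 (Or.inl _)
      have e1 : s₁ * p ≤ s₁ * t := mul_le_mul_of_nonneg_left h1.le hs₁.le
      linarith
    have ht2 : 0 < tent (s₂ * t + q₂) := by
      apply tent_pos
      rw [abs_lt]
      have e1 : s₂ * p < s₂ * t := mul_lt_mul_of_pos_left h1 hs₂
      have e2 : s₂ * t < s₂ * (B + 1) := mul_lt_mul_of_pos_left h2 hs₂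
      constructor <;> linarith
    rw [hR₀'def]
    simp only
    rw [ht1, mul_zero, zero_sub]
    have := mul_pos hs₂ ht2
    linarith
  have hR₀0L : ∀ t, t ≤ A - 1 → R₀ t = 0 := by
    intro t ht
    have e1 : s₁ * t ≤ s₁ * (A - 1) := mul_le_mul_of_nonneg_left ht hs₁.le
    have e2 : s₂ * t ≤ s₂ * p := mul_le_mul_of_nonneg_left (by linarith) hs₂.le
    rw [hR₀def]
    simp only
    rw [Sfun_eq₁ (by linarith), Sfun_eq₁ (by linarith), sub_zero]
  have hR₀0R : ∀ t, B + 1 ≤ t → R₀ t = 0 := by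
    intro t ht
    have e1 : s₁ * p ≤ s₁ * t := mul_le_mul_of_nonneg_left (by linarith) hs₁.le
    have e2 : s₂ * (B + 1) ≤ s₂ * t := mul_le_mul_of_nonneg_left ht hs₂.le
    rw [hR₀def]
    simp only
    rw [Sfun_eq₄ (by linarith), Sfun_eq₄ (by linarith), sub_self]
  have hAS1R₀ : AS1 R₀ := AS1_of_zero_outside hR₀CD (A - 1) (B + 1) hR₀0L hR₀0R
  have hAS1φ : AS1 φ := AS1_of_zero_outside hφ A B h0L h0R
  have hAS1ψ : AS1 ψ := AS1_of_zero_outside hψCD A B hψ0L hψ0R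
  have hNR₀ : 0 ≤ N R₀ := hN.nonneg R₀ hAS1R₀
  have hNS : 0 ≤ N Sfun := hN.nonneg Sfun AS1_Sfun
  -- the ε-δ comparison
  have hcomp : ∀ ε δ : ℝ, 0 < ε → 0 < δ → δ ≤ 1/2 →
      |N φ - N ψ| ≤ 2 * (ε * N R₀ + 40 * δ * Cm * N Sfun) := by
    intro ε δ hε hδ hδ2
    -- the cap cutoff η
    set se : ℝ := 2 / δ with hsedef
    have hse : 0 < se := div_pos two_pos hδ
    have hseδ : se * δ = 2 := by rw [hsedef]; exact div_mul_cancel₀ 2 (ne_of_gt hδ)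
    set qe₁ : ℝ := -1 - se * (p - 2*δ) with hqe₁def
    set qe₂ : ℝ := -1 - se * (p + δ) with hqe₂def
    have hw₁a : se * (p - 2*δ) + qe₁ = -1 := by rw [hqe₁def]; ring
    have hw₁b : se * (p - δ) + qe₁ = 1 := by rw [hqe₁def]; linear_combination hseδ
    have hw₂a : se * (p + δ) + qe₂ = -1 := by rw [hqe₂def]; ring
    have hw₂b : se * (p + 2*δ) + qe₂ = 1 := by rw [hqe₂def]; linear_combination hseδ
    set η : ℝ → ℝ := fun t => Sfun (se * t + qe₁) - Sfun (se * t + qe₂) with hηdef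
    set η' : ℝ → ℝ := fun t => se * tent (se * t + qe₁) - se * tent (se * t + qe₂) with hη'def
    have hηd : ∀ t, HasDerivAt η (η' t) t :=
      fun t => (hasDerivAt_Sfun_affine se qe₁ t).sub (hasDerivAt_Sfun_affine se qe₂ t)
    have hηCD : ContDiff ℝ 1 η :=
      (Sfun_contDiff.comp ((contDiff_id.const_smul se).add contDiff_const)).sub
        (Sfun_contDiff.comp ((contDiff_id.const_smul se).add contDiff_const))
    have hqdiff : qe₁ - qe₂ = 6 := by
      rw [hqe₁def, hqe₂def]; linear_combination 3 * hseδ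
    have hη0 : ∀ t, 0 ≤ η t := by
      intro t
      rw [hηdef]
      simp only
      have := Sfun_monotone (show se * t + qe₂ ≤ se * t + qe₁ by linarith)
      linarith
    have hη1 : ∀ t, η t ≤ 1 := by
      intro t
      rw [hηdef]
      simp only
      have := Sfun_le_one (se * t + qe₁)
      have := Sfun_nonneg (se * t + qe₂)
      linarith
    have hηcap : ∀ t, p - δ ≤ t → t ≤ p + δ → η t = 1 := by
      intro t h1 h2
      have e1 : se * (p - δ) ≤ se * t := mul_le_mul_of_nonneg_left h1 hse.le
      have e2 : se * t ≤ se * (p + δ) := mul_le_mul_of_nonneg_left h2 hse.le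
      rw [hηdef]
      simp only
      rw [Sfun_eq₄ (by linarith), Sfun_eq₁ (by linarith), sub_zero]
    have hηout : ∀ t, t ∉ Ioo (p - 2*δ) (p + 2*δ) → η t = 0 ∧ η' t = 0 := by
      intro t ht
      rw [mem_Ioo, not_and_or] at ht
      rcases ht with ht | ht
      · push_neg at ht
        have e1 : se * t ≤ se * (p - 2*δ) := mul_le_mul_of_nonneg_left ht hse.le
        constructor
        · rw [hηdef]; simp only
          rw [Sfun_eq₁ (by linarith), Sfun_eq₁ (by linarith), sub_zero]
        · rw [hη'def]; simp only
          rw [tent_eq_zero (le_abs.2 (Or.inr (by linarith))),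
            tent_eq_zero (le_abs.2 (Or.inr (by linarith)))]
          ring
      · push_neg at ht
        have e1 : se * (p + 2*δ) ≤ se * t := mul_le_mul_of_nonneg_left ht hse.le
        constructor
        · rw [hηdef]; simp only
          rw [Sfun_eq₄ (by linarith), Sfun_eq₄ (by linarith), sub_self]
        · rw [hη'def]; simp only
          rw [tent_eq_zero (le_abs.2 (Or.inl (by linarith))),
            tent_eq_zero (le_abs.2 (Or.inl (by linarith)))]
          ring
    have hη'L : ∀ t ≤ p, 0 ≤ η' t := by
      intro t ht
      have e1 : se * t ≤ se * p := mul_le_mul_of_nonneg_left ht hse.le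
      have e2 : se * p + qe₂ = -1 - se * δ := by rw [hqe₂def]; ring
      rw [hη'def]
      simp only
      rw [tent_eq_zero (x := se * t + qe₂) (le_abs.2 (Or.inr (by linarith [hseδ])))]
      rw [mul_zero, sub_zero]
      exact mul_nonneg hse.le (tent_nonneg _)
    have hη'R : ∀ t, p ≤ t → η' t ≤ 0 := by
      intro t ht
      have e1 : se * p ≤ se * t := mul_le_mul_of_nonneg_left ht hse.le
      have e2 : se * p + qe₁ = -1 + 2 * (se * δ) := by rw [hqe₁def]; ring
      rw [hη'def]
      simp only
      rw [tent_eq_zero (x := se * t + qe₁) (le_abs.2 (Or.inl (by linarith [hseδ])))]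
      rw [mul_zero, zero_sub]
      have := mul_nonneg hse.le (tent_nonneg (se * t + qe₂))
      linarith
    have hη'b : ∀ t, |η' t| ≤ 2/δ := by
      intro t
      rw [hη'def]
      simp only
      rw [abs_le]
      have a1 := tent_nonneg (se * t + qe₁)
      have a2 := tent_le_one (se * t + qe₁)
      have a3 := tent_nonneg (se * t + qe₂)
      have a4 := tent_le_one (se * t + qe₂)
      have b1 : se * tent (se * t + qe₁) ≤ se * 1 := mul_le_mul_of_nonneg_left a2 hse.le
      have b2 : se * tent (se * t + qe₂) ≤ se * 1 := mul_le_mul_of_nonneg_left a4 hse.le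
      have b3 := mul_nonneg hse.le a1
      have b4 := mul_nonneg hse.le a3
      constructor
      · rw [hsedef] at b2 ⊢; linarith
      · rw [hsedef] at b1 ⊢; linarith
    -- apply the side lemma to φ and to ψ
    set Fφ : ℝ → ℝ := fun t => φ t + ε * R₀ t + η t * (M - φ t) with hFφdef
    set Fψ : ℝ → ℝ := fun t => ψ t + ε * R₀ t + η t * (M - ψ t) with hFψdef
    obtain ⟨hFφCD, hFφcap, hFφL, hFφR, hFφpos, hFφneg, hFφnorm, hAS1Fφ⟩ :=
      side_lemma hN hδ hδ2 hA hB hε hCm hφ hφM hMp h0L h0R hφ'L hφ'R hφ'b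
        hR₀d hR₀CD hAS1R₀ hR₀L hR₀R hηd hηCD hη0 hη1 hηcap hηout hη'L hη'R hη'b
        Fφ hFφdef
    obtain ⟨hFψCD, hFψcap, hFψL, hFψR, hFψpos, hFψneg, hFψnorm, hAS1Fψ⟩ :=
      side_lemma hN hδ hδ2 hA hB hε hCm hψCD hψM hψp hψ0L hψ0R hψ'L hψ'R hψ'b
        hR₀d hR₀CD hAS1R₀ hR₀L hR₀R hηd hηCD hη0 hη1 hηcap hηout hη'L hη'R hη'b
        Fψ hFψdef
    -- the hybrid function K
    set K : ℝ → ℝ := fun t => if t ≤ p then Fφ t else Fψ t with hKdef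
    have hcapeq : ∀ t, p - δ ≤ t → t ≤ p + δ → Fφ t = Fψ t := by
      intro t h1 h2
      rw [hFφcap t h1 h2, hFψcap t h1 h2]
    have hK1 : ∀ t ≤ p + δ, K t = Fφ t := by
      intro t ht
      rw [hKdef]
      by_cases h : t ≤ p
      · simp only [if_pos h]
      · push_neg at h
        simp only [if_neg (not_le.2 h)]
        exact (hcapeq t (by linarith) ht).symm
    have hK2 : ∀ t, p - δ ≤ t → K t = Fψ t := by
      intro t ht
      rw [hKdef]
      by_cases h : t ≤ p
      · simp only [if_pos h]
        exact hcapeq t ht (by linarith)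
      · simp only [if_neg h]
    have hKevφ : ∀ t₀, t₀ < p + δ → K =ᶠ[𝓝 t₀] Fφ := by
      intro t₀ h
      filter_upwards [Iio_mem_nhds h] with x hx
      exact hK1 x (le_of_lt hx)
    have hKevψ : ∀ t₀, p - δ < t₀ → K =ᶠ[𝓝 t₀] Fψ := by
      intro t₀ h
      filter_upwards [Ioi_mem_nhds h] with x hx
      exact hK2 x (le_of_lt hx)
    have hKCD : ContDiff ℝ 1 K := by
      rw [contDiff_iff_contDiffAt]
      intro t₀
      rcases lt_or_ge t₀ (p + δ) with h | h
      · exact hFφCD.contDiffAt.congr_of_eventuallyEq (hKevφ t₀ h)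
      · exact hFψCD.contDiffAt.congr_of_eventuallyEq (hKevψ t₀ (by linarith))
    -- left gluing : K = Fψ ∘ h₁
    obtain ⟨h₁, hOP₁, hKeq₁⟩ := glue_exists (F := K) (G := Fψ)
      (u := A - 1/2) (u' := A) (v' := p - δ) (v := p - δ/2)
      (by linarith) (by linarith) (by linarith) hKCD hFψCD
      (by
        intro t ht
        rw [(hKevφ t (by rcases ht with ⟨_, h2⟩; linarith)).deriv_eq]
        exact hFφpos t ht)
      (fun t ht => hFψpos t ht)
      (by
        intro t ht
        rw [hK1 t (by linarith), hFφL t ht, hFψL t ht])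
      (fun t ht => hK2 t ht)
    -- right gluing : Fφ = K ∘ h₂ (via negation)
    obtain ⟨h₂, hOP₂, hKeq₂⟩ := glue_exists (F := fun t => -Fφ t) (G := fun t => -K t)
      (u := p + δ/2) (u' := p + δ) (v' := B) (v := B + 1/2)
      (by linarith) (by linarith) (by linarith) hFφCD.neg hKCD.neg
      (by
        intro t ht
        rw [deriv.fun_neg]
        have := hFφneg t ht
        linarith)
      (by
        intro t ht
        rw [deriv.fun_neg, (hKevψ t (by rcases ht with ⟨h1, _⟩; linarith)).deriv_eq]
        have := hFψneg t ht
        linarith)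
      (by
        intro t ht
        have := hK1 t ht
        rw [this])
      (by
        intro t ht
        have e1 : K t = Fψ t := hK2 t (by linarith)
        rw [e1, hFψR t ht, hFφR t ht])
    have hFφK : ∀ t, Fφ t = K (h₂ t) := by
      intro t
      have := congrFun hKeq₂ t
      simp only [comp_apply] at this
      linarith
    have hcompose : Fφ = Fψ ∘ (h₁ ∘ h₂) := by
      funext t
      rw [hFφK t]
      have := congrFun hKeq₁ (h₂ t)
      simp only [comp_apply] at this ⊢
      rw [this]
    have hNF : N Fφ = N Fψ := by
      rw [hcompose]
      exact hN.invariant Fψ (h₁ ∘ h₂) hAS1Fψ (opdiffeo_comp hOP₁ hOP₂)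
    -- assemble the estimate
    have hd1 : |N φ - N Fφ| ≤ ε * N R₀ + 40 * δ * Cm * N Sfun := by
      have h1 := rpi_abs_sub_le hN hAS1φ hAS1Fφ
      have e : N (fun t => φ t - Fφ t) = N (fun t => Fφ t - φ t) := by
        have e2 : (fun t => φ t - Fφ t) = (fun t => -(Fφ t - φ t)) := by funext t; ring
        rw [e2, rpi_neg hN (AS1_sub hAS1Fφ hAS1φ)]
      rw [e] at h1
      exact le_trans h1 hFφnorm
    have hd2 : |N ψ - N Fψ| ≤ ε * N R₀ + 40 * δ * Cm * N Sfun := by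
      have h1 := rpi_abs_sub_le hN hAS1ψ hAS1Fψ
      have e : N (fun t => ψ t - Fψ t) = N (fun t => Fψ t - ψ t) := by
        have e2 : (fun t => ψ t - Fψ t) = (fun t => -(Fψ t - ψ t)) := by funext t; ring
        rw [e2, rpi_neg hN (AS1_sub hAS1Fψ hAS1ψ)]
      rw [e] at h1
      exact le_trans h1 hFψnorm
    calc |N φ - N ψ| = |(N φ - N Fφ) + (N Fφ - N Fψ) + (N Fψ - N ψ)| := by ring_nf
    _ ≤ |N φ - N Fφ| + |N Fφ - N Fψ| + |N Fψ - N ψ| := abs_add_three _ _ _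
    _ ≤ 2 * (ε * N R₀ + 40 * δ * Cm * N Sfun) := by
        have e2 : |N Fφ - N Fψ| = 0 := by rw [hNF, sub_self, abs_zero]
        have e3 : |N Fψ - N ψ| ≤ ε * N R₀ + 40 * δ * Cm * N Sfun := by
          rw [abs_sub_comm]; exact hd2
        linarith
  -- take limits
  have hfinal : N φ = N ψ := by
    apply eq_of_abs_sub_le_all' (C := 1)
    intro ρ hρ
    set ε : ℝ := ρ / (8 * (N R₀ + 1)) with hεdef
    set W : ℝ := 320 * (Cm + 1) * (N Sfun + 1) with hWdef
    have hW : 0 < W := by rw [hWdef]; positivity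
    set δ : ℝ := min (1/2) (ρ / W) with hδdef
    have hε : 0 < ε := by rw [hεdef]; positivity
    have hδ : 0 < δ := by
      rw [hδdef]
      apply lt_min (by norm_num)
      positivity
    have hδ2 : δ ≤ 1/2 := min_le_left _ _
    have h := hcomp ε δ hε hδ hδ2
    have hb1 : ε * N R₀ ≤ ρ / 8 := by
      have key : ε * (N R₀ + 1) = ρ / 8 := by
        rw [hεdef]
        field_simp
      nlinarith
    have hδW : δ * W ≤ ρ := by
      have h1 : δ ≤ ρ / W := min_le_right _ _
      exact (le_div_iff₀ hW).1 h1
    have hb2 : 40 * δ * Cm * N Sfun ≤ ρ / 8 := by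
      have h2 : 40 * δ * Cm * N Sfun ≤ 40 * (δ * (Cm + 1) * (N Sfun + 1)) := by
        nlinarith [hδ.le, hCm.le, hNS, mul_nonneg hδ.le hCm.le]
      have h3 : 40 * (δ * (Cm + 1) * (N Sfun + 1)) = δ * W / 8 := by
        rw [hWdef]; ring
      linarith
    calc |N φ - N ψ| ≤ 2 * (ε * N R₀ + 40 * δ * Cm * N Sfun) := h
    _ ≤ 2 * (ρ / 8 + ρ / 8) := by linarith
    _ ≤ ρ * 1 := by linarith
  rw [hfinal]
  have e : ψ = (fun t => M * Lam t) ∘ (fun t => t + (-p)) := by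
    funext t
    simp only [hψdef, comp_apply, sub_eq_add_neg]
  rw [e, hN.invariant (fun t => M * Lam t) (fun t => t + (-p))
    (AS1_smul M AS1_Lam) (opdiffeo_translate (-p)),
    hN.smul M Lam AS1_Lam, abs_of_pos hMpos]

end Bump

section Final

open Filter Topology Set Function

lemma exists_zero_outside {f : ℝ → ℝ} (hcs : HasCompactSupport f) :
    ∃ A B : ℝ, A ≤ B ∧ (∀ t ≤ A, f t = 0) ∧ (∀ t, B ≤ t → f t = 0) := by
  obtain ⟨r, hr⟩ := hcs.isBounded.subset_closedBall 0
  refine ⟨-(|r| + 1), |r| + 1, by have := abs_nonneg r; linarith, ?_, ?_⟩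
  · intro t ht
    apply image_eq_zero_of_notMem_tsupport
    intro hmem
    have := hr hmem
    simp only [Metric.mem_closedBall, Real.dist_eq, sub_zero] at this
    have h1 := le_abs_self r
    have h2 := neg_abs_le t
    linarith
  · intro t ht
    apply image_eq_zero_of_notMem_tsupport
    intro hmem
    have := hr hmem
    simp only [Metric.mem_closedBall, Real.dist_eq, sub_zero] at this
    have h1 := le_abs_self r
    have h2 := le_abs_self t
    linarith

end Final


theorem statement3 (N : (ℝ → ℝ) → ℝ) (hN : IsRPINorm N)
    (φ : ℝ → ℝ) (hc1 : ContDiff ℝ 1 φ) (hcs : HasCompactSupport φ) (tb : ℝ)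
    (h1 : MonotoneOn φ (Set.Iic tb) ∨ AntitoneOn φ (Set.Iic tb))
    (h2 : MonotoneOn φ (Set.Ici tb) ∨ AntitoneOn φ (Set.Ici tb)) :
    N φ = (⨆ t, |φ t|) * N Lam := by
  classical
  have hAS1φ : AS1 φ := AS1_of_compactSupport hc1 hcs
  obtain ⟨A₀, B₀, hA₀B₀, hL0, hR0⟩ := exists_zero_outside hcs
  -- the sup is attained at tb
  have hmax : ∀ t, |φ t| ≤ |φ tb| := by
    intro t
    rcases le_or_gt t tb with ht | ht
    · set a₀ := min t A₀ with ha₀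
      have ha₀t : a₀ ≤ t := min_le_left _ _
      have ha₀0 : φ a₀ = 0 := hL0 _ (min_le_right _ _)
      rcases h1 with h | h
      · have e1 : φ a₀ ≤ φ t := h (Set.mem_Iic.2 (by linarith)) (Set.mem_Iic.2 ht) ha₀t
        have e2 : φ t ≤ φ tb := h (Set.mem_Iic.2 ht) (Set.mem_Iic.2 le_rfl) ht
        rw [ha₀0] at e1
        rw [abs_of_nonneg e1, abs_of_nonneg (by linarith)]
        exact e2
      · have e1 : φ t ≤ φ a₀ := h (Set.mem_Iic.2 (by linarith)) (Set.mem_Iic.2 ht) ha₀t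
        have e2 : φ tb ≤ φ t := h (Set.mem_Iic.2 ht) (Set.mem_Iic.2 le_rfl) ht
        rw [ha₀0] at e1
        rw [abs_of_nonpos e1, abs_of_nonpos (by linarith)]
        linarith
    · set b₀ := max t B₀ with hb₀
      have hb₀t : t ≤ b₀ := le_max_left _ _
      have hb₀0 : φ b₀ = 0 := hR0 _ (le_max_right _ _)
      rcases h2 with h | h
      · have e1 : φ t ≤ φ b₀ := h (Set.mem_Ici.2 ht.le) (Set.mem_Ici.2 (by linarith)) hb₀t
        have e2 : φ tb ≤ φ t := h (Set.mem_Ici.2 le_rfl) (Set.mem_Ici.2 ht.le) ht.le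
        rw [hb₀0] at e1
        rw [abs_of_nonpos (by linarith), abs_of_nonpos (by linarith)]
        linarith
      · have e1 : φ b₀ ≤ φ t := h (Set.mem_Ici.2 ht.le) (Set.mem_Ici.2 (by linarith)) hb₀t
        have e2 : φ t ≤ φ tb := h (Set.mem_Ici.2 le_rfl) (Set.mem_Ici.2 ht.le) ht.le
        rw [hb₀0] at e1
        rw [abs_of_nonneg e1, abs_of_nonneg (by linarith)]
        exact e2
  have hbdd : BddAbove (Set.range fun t => |φ t|) := by
    refine ⟨|φ tb|, ?_⟩
    rintro y ⟨t, rfl⟩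
    exact hmax t
  have hsup : (⨆ t, |φ t|) = |φ tb| :=
    le_antisymm (ciSup_le hmax) (le_ciSup hbdd tb)
  rw [hsup]
  rcases lt_trichotomy (φ tb) 0 with hneg | hzero | hpos
  · -- negative bump
    have h1' : AntitoneOn φ (Set.Iic tb) := by
      rcases h1 with h | h
      · exfalso
        have := h (Set.mem_Iic.2 (min_le_left tb A₀)) (Set.mem_Iic.2 le_rfl) (min_le_left tb A₀)
        rw [hL0 _ (min_le_right tb A₀)] at this
        linarith
      · exact h
    have h2' : MonotoneOn φ (Set.Ici tb) := by
      rcases h2 with h | h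
      · exact h
      · exfalso
        have := h (Set.mem_Ici.2 le_rfl) (Set.mem_Ici.2 (le_max_left tb B₀)) (le_max_left tb B₀)
        rw [hR0 _ (le_max_right tb B₀)] at this
        linarith
    set φn : ℝ → ℝ := fun t => -φ t with hφndef
    have hφnCD : ContDiff ℝ 1 φn := hc1.neg
    have hmono : MonotoneOn φn (Set.Iic tb) := by
      intro s hs t ht hst
      simp only [hφndef]
      have := h1' hs ht hst
      linarith
    have hanti : AntitoneOn φn (Set.Ici tb) := by
      intro s hs t ht hst
      simp only [hφndef]
      have := h2' hs ht hst
      linarith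
    have hbump := bump_norm hN (p := tb) (M := -φ tb)
      (A := min A₀ (tb - 2)) (B := max B₀ (tb + 2)) hφnCD
      (min_le_right _ _) (le_max_right _ _) hmono hanti
      (fun t ht => by simp only [hφndef]; rw [hL0 t (le_trans ht (min_le_left _ _))]; ring)
      (fun t ht => by simp only [hφndef]; rw [hR0 t (le_trans (le_max_left _ _) ht)]; ring)
      (by simp only [hφndef]) (by linarith)
    have hNeq : N φn = N φ := rpi_neg hN hAS1φ
    rw [← hNeq, hbump, abs_of_neg hneg]
  · -- zero function
    have hzero' : ∀ t, φ t = 0 := by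
      intro t
      have := hmax t
      rw [hzero, abs_zero] at this
      have := abs_nonneg (φ t)
      have h3 : |φ t| = 0 := le_antisymm ‹|φ t| ≤ 0› this
      rwa [abs_eq_zero] at h3
    rw [(hN.eq_zero_iff φ hAS1φ).2 hzero', hzero, abs_zero, zero_mul]
  · -- positive bump
    have h1' : MonotoneOn φ (Set.Iic tb) := by
      rcases h1 with h | h
      · exact h
      · exfalso
        have := h (Set.mem_Iic.2 (min_le_left tb A₀)) (Set.mem_Iic.2 le_rfl) (min_le_left tb A₀)
        rw [hL0 _ (min_le_right tb A₀)] at this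
        linarith
    have h2' : AntitoneOn φ (Set.Ici tb) := by
      rcases h2 with h | h
      · exfalso
        have := h (Set.mem_Ici.2 le_rfl) (Set.mem_Ici.2 (le_max_left tb B₀)) (le_max_left tb B₀)
        rw [hR0 _ (le_max_right tb B₀)] at this
        linarith
      · exact h
    have hbump := bump_norm hN (p := tb) (M := φ tb)
      (A := min A₀ (tb - 2)) (B := max B₀ (tb + 2)) hc1
      (min_le_right _ _) (le_max_right _ _) h1' h2'
      (fun t ht => hL0 t (le_trans ht (min_le_left _ _)))
      (fun t ht => hR0 t (le_trans (le_max_left _ _) ht))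
      rfl hpos
    rw [hbump, abs_of_pos hpos]
end
end

section
/- For every ψ ∈ AS¹(ℝ) with ψ not identically zero, the function φ ↦ ‖φ‖_[ψ] = sup_h |∫_ℝ φ(−t) · (ψ ∘ h)′(t) dt| (supremum over all orientation-preserving C¹-diffeomorphisms h of ℝ) takes finite values and is a norm on AS¹(ℝ); moreover it is invariant under reparametrization, i.e. ‖φ ∘ h‖_[ψ] = ‖φ‖_[ψ] for every φ ∈ AS¹(ℝ) and every orientation-preserving C¹-diffeomorphism h of ℝ. -/
open MeasureTheory Set

noncomputable section

/-!
Substituting `s = h t` turns the defining integral into `∫ φ(-g s) ψ'(s) ds` with `g = h⁻¹`, so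
`‖φ‖_[ψ]` is the supremum of their absolute values over all orientation-preserving diffeomorphisms
`g`. In that form `sup |φ| · ∫ |ψ'|` bounds every value, homogeneity and the triangle inequality
hold termwise, and replacing `φ` by `φ ∘ h` only composes `g` with the diffeomorphism `t ↦ -h (-t)`.
For definiteness, let `g_ε` tend to `-t₀` left of `s₀` and to `+∞` right of `s₀`: by dominated
convergence the integrals tend to `φ(t₀) ψ(s₀)`, which vanishes only if `φ(t₀) = 0` or `ψ(s₀) = 0`.
-/

open Filter Topology

namespace OPDiffeo

variable {h k : ℝ → ℝ}

lemma differentiable (hh : OPDiffeo h) : Differentiable ℝ h :=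
  hh.1.differentiable one_ne_zero

lemma of_surjective (hk : ContDiff ℝ 1 k) (hd : ∀ t, 0 < deriv k t)
    (hsurj : Function.Surjective k) : OPDiffeo k := by
  have hmono : StrictMono k := strictMono_of_deriv_pos hd
  let e : ℝ ≃ₜ ℝ := (hmono.orderIsoOfSurjective k hsurj).toHomeomorph
  have hsymm : ContDiff ℝ 1 (e.symm : ℝ → ℝ) :=
    e.contDiff_symm_deriv (fun t => (hd t).ne')
      (fun t => (hk.differentiable one_ne_zero t).hasDerivAt) hk
  exact ⟨hk, ⟨hmono.injective, hsurj⟩, ⟨e.symm, hsymm, e.symm_apply_apply, e.apply_symm_apply⟩, hd⟩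

protected lemma id : OPDiffeo id :=
  of_surjective contDiff_id (fun t => by simp) Function.surjective_id

lemma comp (hh : OPDiffeo h) (hk : OPDiffeo k) : OPDiffeo (h ∘ k) := by
  refine of_surjective (hh.1.comp hk.1) (fun t => ?_) (hh.2.1.2.comp hk.2.1.2)
  rw [deriv_comp t (hh.differentiable _) (hk.differentiable _)]
  exact mul_pos (hh.2.2.2 _) (hk.2.2.2 _)

lemma exists_inverse (hh : OPDiffeo h) :
    ∃ g, OPDiffeo g ∧ Function.LeftInverse g h ∧ Function.RightInverse g h := by
  obtain ⟨g, hg, hgh, hhg⟩ := hh.2.2.1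
  refine ⟨g, of_surjective hg (fun t => ?_) hgh.surjective, hgh, hhg⟩
  obtain ⟨s, rfl⟩ := hh.2.1.2 t
  have hchain : deriv g (h s) * deriv h s = 1 := by
    rw [← deriv_comp s (hg.differentiable one_ne_zero _) (hh.differentiable _), hgh.comp_eq_id,
      deriv_id]
  exact (pos_iff_pos_of_mul_pos (hchain ▸ one_pos)).2 (hh.2.2.2 s)

lemma neg_comp_neg (hh : OPDiffeo h) : OPDiffeo fun t => -h (-t) := by
  refine of_surjective (hh.1.comp contDiff_neg).neg (fun t => ?_) fun y => ?_
  · rw [deriv.fun_neg, deriv_comp_neg, neg_neg]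
    exact hh.2.2.2 _
  · obtain ⟨s, hs⟩ := hh.2.1.2 (-y)
    exact ⟨-s, by simp [hs]⟩

end OPDiffeo

namespace AS1

variable {φ : ℝ → ℝ}

lemma continuous (hφ : AS1 φ) : Continuous φ :=
  hφ.1.continuous

lemma differentiable (hφ : AS1 φ) : Differentiable ℝ φ :=
  hφ.1.differentiable one_ne_zero

lemma continuous_deriv (hφ : AS1 φ) : Continuous (deriv φ) :=
  hφ.1.continuous_deriv le_rfl

lemma exists_abs_le (hφ : AS1 φ) : ∃ M, ∀ t, |φ t| ≤ M := by
  obtain ⟨hC, a, b, hab, h0, hb⟩ := hφ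
  obtain ⟨M, hM⟩ := isCompact_Icc.exists_bound_of_continuousOn hC.continuous.continuousOn
    (s := Icc a b)
  refine ⟨M, fun t => ?_⟩
  rcases le_or_gt t a with hta | hat
  · simpa [h0 t hta, h0 a le_rfl] using hM a ⟨le_rfl, hab⟩
  rcases le_or_gt t b with htb | hbt
  · exact hM t ⟨hat.le, htb⟩
  · simpa [hb t hbt.le] using hM b ⟨hab, le_rfl⟩

lemma eventually_eq_zero_atBot (hφ : AS1 φ) : ∀ᶠ t in atBot, φ t = 0 := by
  obtain ⟨-, a, -, -, h0, -⟩ := hφ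
  exact eventually_atBot.2 ⟨a, h0⟩

lemma hasCompactSupport_deriv (hφ : AS1 φ) : HasCompactSupport (deriv φ) := by
  obtain ⟨-, a, b, -, h0, hb⟩ := hφ
  refine HasCompactSupport.of_support_subset_isCompact (isCompact_Icc (a := a) (b := b))
    fun t ht => ?_
  by_contra hmem
  apply ht
  rcases not_and_or.1 hmem with hta | hbt
  · exact (eventuallyEq_of_mem (Iio_mem_nhds (not_le.1 hta)) fun s hs =>
      h0 s (le_of_lt hs)).deriv_eq.trans (deriv_const t 0)
  · exact (eventuallyEq_of_mem (Ioi_mem_nhds (not_le.1 hbt)) fun s hs =>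
      hb s (le_of_lt hs)).deriv_eq.trans (deriv_const t (φ b))

lemma integrable_deriv (hφ : AS1 φ) : Integrable (deriv φ) :=
  hφ.continuous_deriv.integrable_of_hasCompactSupport hφ.hasCompactSupport_deriv

lemma integral_Iic_deriv (hφ : AS1 φ) (d : ℝ) : ∫ s in Iic d, deriv φ s = φ d := by
  have hlim : Tendsto φ atBot (𝓝 0) :=
    tendsto_const_nhds.congr' (hφ.eventually_eq_zero_atBot.mono fun _ ht => ht.symm)
  simpa using integral_Iic_of_hasDerivAt_of_tendsto'
    (fun t _ => (hφ.differentiable t).hasDerivAt) hφ.integrable_deriv.integrableOn hlim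

end AS1

def reparamIntegral (ψ φ g : ℝ → ℝ) : ℝ := ∫ s, φ (-g s) * deriv ψ s

section reparamIntegral

variable {ψ φ : ℝ → ℝ}

lemma integral_mul_deriv_comp_eq_reparamIntegral {h g : ℝ → ℝ} (hψ : ContDiff ℝ 1 ψ)
    (hh : OPDiffeo h) (hgh : Function.LeftInverse g h) :
    ∫ t, φ (-t) * deriv (ψ ∘ h) t = reparamIntegral ψ φ g := by
  have hcov := integral_image_eq_integral_abs_deriv_smul MeasurableSet.univ
    (fun t _ => (hh.differentiable t).hasDerivAt.hasDerivWithinAt) hh.2.1.1.injOn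
    fun s => φ (-g s) * deriv ψ s
  rw [image_univ, hh.2.1.2.range_eq, setIntegral_univ, setIntegral_univ] at hcov
  rw [reparamIntegral, hcov]
  refine integral_congr_ae (Eventually.of_forall fun t => ?_)
  dsimp only
  rw [deriv_comp t (hψ.differentiable one_ne_zero _) (hh.differentiable _), smul_eq_mul,
    abs_of_pos (hh.2.2.2 t), hgh t]
  ring

lemma range_abs_integral_eq (hψ : ContDiff ℝ 1 ψ) (φ : ℝ → ℝ) :
    (range fun h : {h : ℝ → ℝ // OPDiffeo h} => |∫ t, φ (-t) * deriv (ψ ∘ h.1) t|) =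
      range fun g : {g : ℝ → ℝ // OPDiffeo g} => |reparamIntegral ψ φ g| := by
  ext x
  constructor
  · rintro ⟨⟨h, hh⟩, rfl⟩
    obtain ⟨g, hg, hgh, -⟩ := hh.exists_inverse
    exact ⟨⟨g, hg⟩, by dsimp only; rw [integral_mul_deriv_comp_eq_reparamIntegral hψ hh hgh]⟩
  · rintro ⟨⟨g, hg⟩, rfl⟩
    obtain ⟨h, hh, -, hgh⟩ := hg.exists_inverse
    exact ⟨⟨h, hh⟩, by dsimp only; rw [integral_mul_deriv_comp_eq_reparamIntegral hψ hh hgh]⟩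

lemma stdNorm_eq_iSup_reparamIntegral (hψ : ContDiff ℝ 1 ψ) (φ : ℝ → ℝ) :
    stdNorm ψ φ = ⨆ g : {g : ℝ → ℝ // OPDiffeo g}, |reparamIntegral ψ φ g| := by
  rw [stdNorm, iSup, iSup, range_abs_integral_eq hψ]

lemma integrable_reparamIntegral_integrand {g : ℝ → ℝ} (hψ : AS1 ψ) (hφ : Continuous φ)
    (hg : Continuous g) : Integrable fun s => φ (-g s) * deriv ψ s := by
  have hcont : Continuous fun s => φ (-g s) * deriv ψ s := (hφ.comp hg.neg).mul hψ.continuous_deriv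
  exact hcont.integrable_of_hasCompactSupport
    (hψ.hasCompactSupport_deriv.mul_left (f := fun s => φ (-g s)))

lemma abs_reparamIntegral_le {M : ℝ} (hψ : AS1 ψ) (hM : ∀ t, |φ t| ≤ M) (g : ℝ → ℝ) :
    |reparamIntegral ψ φ g| ≤ M * ∫ s, |deriv ψ s| := by
  calc |reparamIntegral ψ φ g| = ‖∫ s, φ (-g s) * deriv ψ s‖ := rfl
    _ ≤ ∫ s, M * |deriv ψ s| :=
      norm_integral_le_of_norm_le (hψ.integrable_deriv.abs.const_mul M)
        (Eventually.of_forall fun s => by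
          rw [Real.norm_eq_abs, abs_mul]
          exact mul_le_mul_of_nonneg_right (hM _) (abs_nonneg _))
    _ = M * ∫ s, |deriv ψ s| := integral_const_mul M _

lemma bddAbove_range_abs_reparamIntegral (hψ : AS1 ψ) (hφ : AS1 φ) :
    BddAbove (range fun g : {g : ℝ → ℝ // OPDiffeo g} => |reparamIntegral ψ φ g|) := by
  obtain ⟨M, hM⟩ := hφ.exists_abs_le
  exact ⟨M * ∫ s, |deriv ψ s|, forall_mem_range.2 fun g => abs_reparamIntegral_le hψ hM g⟩

lemma abs_reparamIntegral_le_stdNorm {g : ℝ → ℝ} (hψ : AS1 ψ) (hφ : AS1 φ) (hg : OPDiffeo g) :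
    |reparamIntegral ψ φ g| ≤ stdNorm ψ φ := by
  rw [stdNorm_eq_iSup_reparamIntegral hψ.1]
  exact le_ciSup (bddAbove_range_abs_reparamIntegral hψ hφ) ⟨g, hg⟩

lemma reparamIntegral_comp (h g : ℝ → ℝ) :
    reparamIntegral ψ (φ ∘ h) g = reparamIntegral ψ φ ((fun t => -h (-t)) ∘ g) := by
  simp only [reparamIntegral, Function.comp_apply, neg_neg]

end reparamIntegral

lemma iSup_opDiffeo_comp_left {e : ℝ → ℝ} (he : OPDiffeo e) (F : (ℝ → ℝ) → ℝ) :
    ⨆ g : {g : ℝ → ℝ // OPDiffeo g}, F (e ∘ g) = ⨆ g : {g : ℝ → ℝ // OPDiffeo g}, F g := by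
  obtain ⟨e', he', -, hee'⟩ := he.exists_inverse
  have hsurj : Function.Surjective fun g : {g : ℝ → ℝ // OPDiffeo g} =>
      (⟨e ∘ g, he.comp g.2⟩ : {g : ℝ → ℝ // OPDiffeo g}) := fun m =>
    ⟨⟨e' ∘ m, he'.comp m.2⟩, Subtype.ext (funext fun t => hee' (m.1 t))⟩
  exact hsurj.iSup_comp (F ·.1)

section stdNorm

variable {ψ : ℝ → ℝ}

instance : Nonempty {h : ℝ → ℝ // OPDiffeo h} := ⟨⟨id, OPDiffeo.id⟩⟩

lemma stdNorm_nonneg (φ : ℝ → ℝ) : 0 ≤ stdNorm ψ φ :=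
  Real.iSup_nonneg fun _ => abs_nonneg _

lemma stdNorm_of_forall_eq_zero {φ : ℝ → ℝ} (hφ : ∀ t, φ t = 0) : stdNorm ψ φ = 0 :=
  le_antisymm (ciSup_le fun _ => by simp [hφ]) (stdNorm_nonneg φ)

lemma stdNorm_smul (c : ℝ) (φ : ℝ → ℝ) : stdNorm ψ (fun t => c * φ t) = |c| * stdNorm ψ φ := by
  simp only [stdNorm, Real.mul_iSup_of_nonneg (abs_nonneg c), ← abs_mul, ← integral_const_mul,
    mul_assoc]

lemma stdNorm_add_le {φ₁ φ₂ : ℝ → ℝ} (hψ : AS1 ψ) (h₁ : AS1 φ₁) (h₂ : AS1 φ₂) :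
    stdNorm ψ (fun t => φ₁ t + φ₂ t) ≤ stdNorm ψ φ₁ + stdNorm ψ φ₂ := by
  rw [stdNorm_eq_iSup_reparamIntegral hψ.1]
  refine ciSup_le fun g => ?_
  have hadd : reparamIntegral ψ (fun t => φ₁ t + φ₂ t) g =
      reparamIntegral ψ φ₁ g + reparamIntegral ψ φ₂ g := by
    simp only [reparamIntegral, add_mul]
    exact integral_add (integrable_reparamIntegral_integrand hψ h₁.continuous g.2.1.continuous)
      (integrable_reparamIntegral_integrand hψ h₂.continuous g.2.1.continuous)
  calc |reparamIntegral ψ (fun t => φ₁ t + φ₂ t) g|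
      ≤ |reparamIntegral ψ φ₁ g| + |reparamIntegral ψ φ₂ g| := hadd ▸ abs_add_le _ _
    _ ≤ stdNorm ψ φ₁ + stdNorm ψ φ₂ :=
      add_le_add (abs_reparamIntegral_le_stdNorm hψ h₁ g.2)
        (abs_reparamIntegral_le_stdNorm hψ h₂ g.2)

lemma stdNorm_comp {h : ℝ → ℝ} (hψ : ContDiff ℝ 1 ψ) (φ : ℝ → ℝ) (hh : OPDiffeo h) :
    stdNorm ψ (φ ∘ h) = stdNorm ψ φ := by
  simp only [stdNorm_eq_iSup_reparamIntegral hψ, reparamIntegral_comp]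
  exact iSup_opDiffeo_comp_left hh.neg_comp_neg fun g => |reparamIntegral ψ φ g|

end stdNorm

def stepDiffeo (c d ε s : ℝ) : ℝ := c + ε * (s - d) + Real.exp ((s - d) / ε)

section stepDiffeo

variable {c d ε s : ℝ}

lemma continuous_stepDiffeo : Continuous (stepDiffeo c d ε) := by
  unfold stepDiffeo
  fun_prop

lemma opDiffeo_stepDiffeo (hε : 0 < ε) : OPDiffeo (stepDiffeo c d ε) := by
  have hderiv : ∀ s, HasDerivAt (stepDiffeo c d ε)
      (ε * 1 + Real.exp ((s - d) / ε) * (1 / ε)) s := fun s => by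
    have hlin : HasDerivAt (fun s => s - d) 1 s := (hasDerivAt_id s).sub_const d
    exact ((hlin.const_mul ε).const_add c).add (hlin.div_const ε).exp
  have htop : Tendsto (stepDiffeo c d ε) atTop atTop := by
    refine tendsto_atTop_mono (fun s => le_add_of_nonneg_right (Real.exp_pos _).le) ?_
    exact tendsto_atTop_add_const_left _ c
      ((tendsto_atTop_add_const_right _ (-d) tendsto_id).const_mul_atTop hε)
  have hbot : Tendsto (stepDiffeo c d ε) atBot atBot := by
    refine Tendsto.atBot_add ?_ (Real.tendsto_exp_atBot.comp ?_)
    · exact tendsto_atBot_add_const_left _ c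
        ((tendsto_atBot_add_const_right _ (-d) tendsto_id).const_mul_atBot hε)
    · exact (tendsto_atBot_add_const_right _ (-d) tendsto_id).atBot_div_const hε
  refine OPDiffeo.of_surjective ?_ (fun s => (hderiv s).deriv ▸ by positivity)
    (continuous_stepDiffeo.surjective htop hbot)
  unfold stepDiffeo
  fun_prop

lemma tendsto_stepDiffeo_of_lt (hs : s < d) :
    Tendsto (fun ε => stepDiffeo c d ε s) (𝓝[>] 0) (𝓝 c) := by
  have hlin : Tendsto (fun ε => c + ε * (s - d)) (𝓝[>] 0) (𝓝 (c + 0 * (s - d))) :=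
    (Continuous.tendsto (by fun_prop) 0).mono_left nhdsWithin_le_nhds
  have hexp : Tendsto (fun ε => (s - d) / ε) (𝓝[>] 0) atBot := by
    simp only [div_eq_mul_inv]
    exact tendsto_inv_nhdsGT_zero.const_mul_atTop_of_neg (sub_neg.2 hs)
  simpa [stepDiffeo] using hlin.add (Real.tendsto_exp_atBot.comp hexp)

lemma tendsto_stepDiffeo_of_gt (hs : d < s) :
    Tendsto (fun ε => stepDiffeo c d ε s) (𝓝[>] 0) atTop := by
  have hlin : Tendsto (fun ε => c + ε * (s - d)) (𝓝[>] 0) (𝓝 (c + 0 * (s - d))) :=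
    (Continuous.tendsto (by fun_prop) 0).mono_left nhdsWithin_le_nhds
  have hexp : Tendsto (fun ε => (s - d) / ε) (𝓝[>] 0) atTop := by
    simp only [div_eq_mul_inv]
    exact tendsto_inv_nhdsGT_zero.const_mul_atTop (sub_pos.2 hs)
  exact hlin.add_atTop (Real.tendsto_exp_atTop.comp hexp)

end stepDiffeo

lemma tendsto_reparamIntegral_stepDiffeo {ψ φ : ℝ → ℝ} (hψ : AS1 ψ) (hφ : AS1 φ) (c d : ℝ) :
    Tendsto (fun ε => reparamIntegral ψ φ (stepDiffeo c d ε)) (𝓝[>] 0)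
      (𝓝 (φ (-c) * ψ d)) := by
  obtain ⟨M, hM⟩ := hφ.exists_abs_le
  have hlim : ∀ᵐ s, Tendsto (fun ε => φ (-stepDiffeo c d ε s) * deriv ψ s) (𝓝[>] 0)
      (𝓝 ((Iic d).indicator (fun s => φ (-c) * deriv ψ s) s)) := by
    filter_upwards [volume.ae_ne d] with s hs
    rcases hs.lt_or_gt with hsd | hds
    · rw [indicator_of_mem (mem_Iic.2 hsd.le)]
      exact ((hφ.continuous.tendsto _).comp (tendsto_stepDiffeo_of_lt hsd).neg).mul_const _
    · rw [indicator_of_notMem (notMem_Iic.2 hds)]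
      refine tendsto_const_nhds.congr' ?_
      have hneg : Tendsto (fun ε => -stepDiffeo c d ε s) (𝓝[>] 0) atBot :=
        tendsto_neg_atTop_atBot.comp (tendsto_stepDiffeo_of_gt hds)
      filter_upwards [hneg.eventually hφ.eventually_eq_zero_atBot] with ε hε
      rw [hε, zero_mul]
  have hcont : ∀ ε, Continuous fun s => φ (-stepDiffeo c d ε s) * deriv ψ s := fun ε =>
    (hφ.continuous.comp continuous_stepDiffeo.neg).mul hψ.continuous_deriv
  have hdom := tendsto_integral_filter_of_dominated_convergence (fun s => M * |deriv ψ s|)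
    (Eventually.of_forall fun ε => (hcont ε).aestronglyMeasurable)
    (Eventually.of_forall fun ε => Eventually.of_forall fun s => by
      rw [Real.norm_eq_abs, abs_mul]
      exact mul_le_mul_of_nonneg_right (hM _) (abs_nonneg _))
    (hψ.integrable_deriv.abs.const_mul M) hlim
  rwa [integral_indicator measurableSet_Iic, integral_const_mul, hψ.integral_Iic_deriv] at hdom

lemma eq_zero_of_stdNorm_eq_zero {ψ φ : ℝ → ℝ} (hψ : AS1 ψ) (hψ0 : ¬ ∀ t, ψ t = 0) (hφ : AS1 φ)
    (hnorm : stdNorm ψ φ = 0) (t : ℝ) : φ t = 0 := by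
  obtain ⟨d, hd⟩ := not_forall.1 hψ0
  have hzero : ∀ ε > 0, reparamIntegral ψ φ (stepDiffeo (-t) d ε) = 0 := fun ε hε =>
    abs_nonpos_iff.1 (hnorm ▸ abs_reparamIntegral_le_stdNorm hψ hφ (opDiffeo_stepDiffeo hε))
  have hprod : φ (-(-t)) * ψ d = 0 :=
    tendsto_nhds_unique (tendsto_reparamIntegral_stepDiffeo hψ hφ (-t) d)
      (tendsto_const_nhds.congr' (eventually_mem_nhdsWithin.mono fun ε hε => (hzero ε hε).symm))
  simpa [hd] using hprod

theorem statement7 (ψ : ℝ → ℝ) (hψ : AS1 ψ) (hψ0 : ¬ ∀ t, ψ t = 0) :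
    (∀ φ : ℝ → ℝ, AS1 φ → BddAbove
      (Set.range fun h : {h : ℝ → ℝ // OPDiffeo h} => |∫ t, φ (-t) * deriv (ψ ∘ h.1) t|)) ∧
    IsRPINorm (stdNorm ψ) := by
  refine ⟨fun φ hφ => range_abs_integral_eq hψ.1 φ ▸ bddAbove_range_abs_reparamIntegral hψ hφ,
    { nonneg := fun φ _ => stdNorm_nonneg φ
      eq_zero_iff := fun φ hφ =>
        ⟨eq_zero_of_stdNorm_eq_zero hψ hψ0 hφ, stdNorm_of_forall_eq_zero⟩
      smul := fun c φ _ => stdNorm_smul c φ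
      triangle := fun φ₁ φ₂ h₁ h₂ => stdNorm_add_le hψ h₁ h₂
      invariant := fun φ _ _ hh => stdNorm_comp hψ.1 φ hh }⟩
end
end
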